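/- arXiv:2411.13462 — 6 statements merged into one kernel-verified Lean document; each statement's English description precedes it below -/
import Mathlib

section
/- Let π^X ∝ exp(-V) be a logconcave distribution on ℝⁿ such that a level set of π^X of measure m < 1 contains a ball B_r(x₀). Then the level set {x : V(x) - min V ≤ ℓn} with ℓ = 5 + 13·log(e/(1-m)) also contains B_r(x₀). -/
/-!
Midpoint convexity gives `exp (-V x / 2) ≤ exp (V₀ / 2) * exp (-V ((x + y) / 2))` where
`V y = V₀`, and the substitution `x ↦ (x + y) / 2` costs a factor `2 ^ n`, so
`∫ exp (-V / 2) ≤ 2 ^ n * exp (V₀ / 2) * ∫ exp (-V)`. By Markov's inequality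
`π^X {V > V₀ + t} ≤ 2 ^ n * exp (-t / 2)`, which for `t = ℓ n` is smaller than `1 - m`,
the mass outside the level set `{V ≤ a}`; hence `a ≤ V₀ + ℓ n`.
-/

open MeasureTheory Set
open scoped ENNReal

noncomputable section

open Real Module

section Convex

variable {E : Type*} [AddCommGroup E] [Module ℝ E] {V : E → ℝ}

theorem ConvexOn.exp_neg_half_le (hV : ConvexOn ℝ univ V) (x y : E) :
    exp (-V x / 2) ≤ exp (V y / 2) * exp (-V ((2 : ℝ)⁻¹ • (x + y))) := by
  have hmid : V ((2 : ℝ)⁻¹ • (x + y)) ≤ 2⁻¹ * V x + 2⁻¹ * V y := by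
    rw [smul_add]
    exact hV.2 (mem_univ x) (mem_univ y) (by norm_num) (by norm_num) (by norm_num)
  rw [← exp_add]
  exact exp_le_exp.2 (by linarith)

end Convex

namespace MeasureTheory.Measure

variable {E : Type*} [NormedAddCommGroup E] [NormedSpace ℝ E] [FiniteDimensional ℝ E]
  [MeasurableSpace E] [BorelSpace E] (μ : Measure E) [μ.IsAddHaarMeasure]

theorem lintegral_comp_inv_smul (f : E → ℝ≥0∞) {R : ℝ} (hR : R ≠ 0) :
    ∫⁻ x, f (R⁻¹ • x) ∂μ =
      ENNReal.ofReal |R ^ finrank ℝ E| * ∫⁻ x, f x ∂μ := by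
  have h := lintegral_map_equiv (μ := μ) f (MeasurableEquiv.smul₀ R⁻¹ (inv_ne_zero hR))
  rw [MeasurableEquiv.coe_smul₀, map_addHaar_smul μ (inv_ne_zero hR), lintegral_smul_measure,
    inv_pow, inv_inv, smul_eq_mul] at h
  exact h.symm

end MeasureTheory.Measure

section Gibbs

variable {α : Type*} [MeasurableSpace α]

def gibbsMeasure (μ : Measure α) (V : α → ℝ) : Measure α :=
  ((μ.withDensity fun x => ENNReal.ofReal (exp (-V x))) univ)⁻¹ •
    μ.withDensity fun x => ENNReal.ofReal (exp (-V x))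

variable {μ : Measure α} {V : α → ℝ}

theorem setLIntegral_exp_neg_le (hV : Measurable V) (t : ℝ) :
    ∫⁻ x in {x | t < V x}, ENNReal.ofReal (exp (-V x)) ∂μ ≤
      ENNReal.ofReal (exp (-t / 2)) * ∫⁻ x, ENNReal.ofReal (exp (-V x / 2)) ∂μ := by
  calc ∫⁻ x in {x | t < V x}, ENNReal.ofReal (exp (-V x)) ∂μ
      ≤ ∫⁻ x in {x | t < V x},
          ENNReal.ofReal (exp (-t / 2)) * ENNReal.ofReal (exp (-V x / 2)) ∂μ := by
        refine setLIntegral_mono' (measurableSet_lt measurable_const hV) fun x hx => ?_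
        rw [← ENNReal.ofReal_mul (exp_pos _).le, ← exp_add]
        exact ENNReal.ofReal_le_ofReal (exp_le_exp.2 (by linarith [hx.out]))
    _ ≤ ∫⁻ x, ENNReal.ofReal (exp (-t / 2)) * ENNReal.ofReal (exp (-V x / 2)) ∂μ :=
        setLIntegral_le_lintegral _ _
    _ = _ := lintegral_const_mul' _ _ ENNReal.ofReal_ne_top

theorem gibbsMeasure_le_of_setLIntegral_le {s : Set α} (hs : MeasurableSet s) {c : ℝ≥0∞}
    (h : ∫⁻ x in s, ENNReal.ofReal (exp (-V x)) ∂μ ≤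
      c * ∫⁻ x, ENNReal.ofReal (exp (-V x)) ∂μ) :
    gibbsMeasure μ V s ≤ c := by
  rw [gibbsMeasure, Measure.smul_apply, smul_eq_mul, withDensity_apply _ hs,
    withDensity_apply _ .univ, Measure.restrict_univ]
  set Z := ∫⁻ x, ENNReal.ofReal (exp (-V x)) ∂μ
  calc _ ≤ Z⁻¹ * (c * Z) := by gcongr
    _ ≤ c := by
        rw [mul_left_comm]
        exact mul_le_of_le_one_right' (ENNReal.inv_mul_le_one Z)

theorem absolutelyContinuous_withDensity_exp_neg (hInt : Integrable (fun x => exp (-V x)) μ) :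
    μ ≪ μ.withDensity fun x => ENNReal.ofReal (exp (-V x)) :=
  withDensity_absolutelyContinuous' hInt.1.aemeasurable.ennreal_ofReal
    (ae_of_all _ fun x => by simp [exp_pos])

theorem absolutelyContinuous_gibbsMeasure (hInt : Integrable (fun x => exp (-V x)) μ) :
    μ ≪ gibbsMeasure μ V :=
  have := isFiniteMeasure_withDensity_ofReal hInt.2
  (absolutelyContinuous_withDensity_exp_neg hInt).trans <|
    Measure.absolutelyContinuous_smul (ENNReal.inv_ne_zero.2 (measure_ne_top _ _))

theorem isProbabilityMeasure_gibbsMeasure [NeZero μ]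
    (hInt : Integrable (fun x => exp (-V x)) μ) :
    IsProbabilityMeasure (gibbsMeasure μ V) :=
  have := isFiniteMeasure_withDensity_ofReal hInt.2
  have : NeZero (μ.withDensity fun x => ENNReal.ofReal (exp (-V x))) :=
    ⟨fun h => NeZero.ne μ (by simpa [h] using absolutelyContinuous_withDensity_exp_neg hInt)⟩
  isProbabilityMeasureSMul

end Gibbs

theorem le_of_measure_setOf_lt_lt {α : Type*} [MeasurableSpace α] {ν : Measure α}
    [IsProbabilityMeasure ν] {V : α → ℝ} (hV : Measurable V) {a t : ℝ}
    (h : ν {x | t < V x} < 1 - ν {x | V x ≤ a}) : a ≤ t := by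
  rw [← prob_compl_eq_one_sub (measurableSet_le hV measurable_const), compl_ofPred] at h
  by_contra! hta
  exact (h.trans_le (measure_mono fun x hx => hta.trans (not_le.1 hx))).false

theorem ConvexOn.continuous_of_univ {E : Type*} [NormedAddCommGroup E] [NormedSpace ℝ E]
    [FiniteDimensional ℝ E] {V : E → ℝ} (hV : ConvexOn ℝ univ V) : Continuous V :=
  continuousOn_univ.1 (hV.continuousOn isOpen_univ)

section Haar

variable {E : Type*} [NormedAddCommGroup E] [NormedSpace ℝ E] [FiniteDimensional ℝ E]
  [MeasurableSpace E] [BorelSpace E] (μ : Measure E) [μ.IsAddHaarMeasure] {V : E → ℝ}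

theorem ConvexOn.lintegral_exp_neg_half_le (hV : ConvexOn ℝ univ V) (y : E) :
    ∫⁻ x, ENNReal.ofReal (exp (-V x / 2)) ∂μ ≤
      ENNReal.ofReal (2 ^ finrank ℝ E * exp (V y / 2)) *
        ∫⁻ x, ENNReal.ofReal (exp (-V x)) ∂μ := by
  set f : E → ℝ≥0∞ := fun x => ENNReal.ofReal (exp (-V x))
  calc ∫⁻ x, ENNReal.ofReal (exp (-V x / 2)) ∂μ
      ≤ ∫⁻ x, ENNReal.ofReal (exp (V y / 2)) * f ((2 : ℝ)⁻¹ • (x + y)) ∂μ := by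
        refine lintegral_mono fun x => ?_
        rw [← ENNReal.ofReal_mul (exp_pos _).le]
        exact ENNReal.ofReal_le_ofReal (hV.exp_neg_half_le x y)
    _ = ENNReal.ofReal (exp (V y / 2)) * ∫⁻ x, f ((2 : ℝ)⁻¹ • x) ∂μ := by
        rw [lintegral_const_mul' _ _ ENNReal.ofReal_ne_top,
          lintegral_add_right_eq_self (fun x => f ((2 : ℝ)⁻¹ • x)) y]
    _ = _ := by
        rw [μ.lintegral_comp_inv_smul f two_ne_zero, ← mul_assoc,
          ← ENNReal.ofReal_mul (by positivity), abs_of_pos (by positivity), mul_comm (exp _)]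

theorem ConvexOn.gibbsMeasure_setOf_lt_le (hV : ConvexOn ℝ univ V) (y : E) (t : ℝ) :
    gibbsMeasure μ V {x | t < V x} ≤
      ENNReal.ofReal (2 ^ finrank ℝ E * exp ((V y - t) / 2)) := by
  have hVm : Measurable V := hV.continuous_of_univ.measurable
  refine gibbsMeasure_le_of_setLIntegral_le (measurableSet_lt measurable_const hVm) ?_
  calc _ ≤ ENNReal.ofReal (exp (-t / 2)) * ∫⁻ x, ENNReal.ofReal (exp (-V x / 2)) ∂μ :=
        setLIntegral_exp_neg_le hVm t
    _ ≤ ENNReal.ofReal (exp (-t / 2)) * (ENNReal.ofReal (2 ^ finrank ℝ E * exp (V y / 2)) *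
          ∫⁻ x, ENNReal.ofReal (exp (-V x)) ∂μ) := by
        gcongr
        exact hV.lintegral_exp_neg_half_le μ y
    _ = _ := by
        rw [← mul_assoc, ← ENNReal.ofReal_mul (exp_pos _).le, mul_left_comm, ← exp_add]
        ring_nf

end Haar

theorem two_pow_mul_exp_lt {m : ℝ} (hm0 : 0 ≤ m) (hm : m < 1) {n : ℕ} (hn : 1 ≤ n) :
    2 ^ n * exp (-((5 + 13 * log (exp 1 / (1 - m))) * n) / 2) < 1 - m := by
  set ℓ := 5 + 13 * log (exp 1 / (1 - m)) with hℓ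
  have hu : 0 < 1 - m := by linarith
  have hlog : log (1 - m) ≤ 0 := log_nonpos (by linarith) (by linarith)
  have hc : log 2 - ℓ / 2 < log (1 - m) := by
    rw [hℓ, log_div (exp_ne_zero 1) hu.ne', log_exp]
    linarith [log_two_lt_d9]
  have hn' : (1 : ℝ) ≤ n := by exact_mod_cast hn
  calc 2 ^ n * exp (-(ℓ * n) / 2) = exp (n * (log 2 - ℓ / 2)) := by
        rw [show n * (log 2 - ℓ / 2) = n * log 2 + -(ℓ * n) / 2 by ring, exp_add, exp_nat_mul,
          exp_log two_pos]
    _ < exp (log (1 - m)) := exp_lt_exp.2 (by nlinarith)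
    _ = 1 - m := exp_log hu

theorem level_set_contains_ball_general (n : ℕ) (hn : 1 ≤ n)
    (V : EuclideanSpace ℝ (Fin n) → ℝ) (V₀ : ℝ)
    (hV : ConvexOn ℝ Set.univ V)
    (hatt : ∃ x, V x = V₀)
    (hInt : Integrable (fun x => Real.exp (-V x)))
    (πX : Measure (EuclideanSpace ℝ (Fin n)))
    (hπX : πX = ((volume.withDensity fun x => ENNReal.ofReal (Real.exp (-V x))) Set.univ)⁻¹ •
      volume.withDensity (fun x => ENNReal.ofReal (Real.exp (-V x))))
    (m : ℝ) (hm : m < 1)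
    (a : ℝ) (hma : πX {x | V x ≤ a} = ENNReal.ofReal m)
    (r : ℝ) (x₀ : EuclideanSpace ℝ (Fin n))
    (hball : Metric.ball x₀ r ⊆ {x | V x ≤ a}) :
    Metric.ball x₀ r ⊆
      {x | V x - V₀ ≤ (5 + 13 * Real.log (Real.exp 1 / (1 - m))) * n} := by
  obtain ⟨y, rfl⟩ := hatt
  replace hma : gibbsMeasure volume V {x | V x ≤ a} = ENNReal.ofReal m := by
    rwa [hπX] at hma
  have := isProbabilityMeasure_gibbsMeasure hInt
  intro x hx
  have hm0 : 0 < m := by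
    have hball_ne : gibbsMeasure volume V (Metric.ball x₀ r) ≠ 0 := fun h =>
      (Metric.measure_ball_pos volume x₀ (Metric.pos_of_mem_ball hx)).ne'
        (absolutelyContinuous_gibbsMeasure hInt h)
    rw [← ENNReal.ofReal_pos, ← hma, pos_iff_ne_zero]
    exact fun h => hball_ne (measure_mono_null hball h)
  set ℓ := 5 + 13 * log (exp 1 / (1 - m))
  have ha : a ≤ V y + ℓ * n := by
    refine le_of_measure_setOf_lt_lt (ν := gibbsMeasure volume V)
      hV.continuous_of_univ.measurable ?_
    calc _ ≤ ENNReal.ofReal (2 ^ n * exp (-(ℓ * n) / 2)) := by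
          simpa [finrank_euclideanSpace_fin] using
            hV.gibbsMeasure_setOf_lt_le volume y (V y + ℓ * n)
      _ < ENNReal.ofReal (1 - m) :=
          (ENNReal.ofReal_lt_ofReal_iff (by linarith)).2 (two_pow_mul_exp_lt hm0.le hm hn)
      _ = _ := by rw [ENNReal.ofReal_sub _ hm0.le, ENNReal.ofReal_one, hma]
  show V x - V y ≤ ℓ * n
  linarith [show V x ≤ a from hball hx]

/-- If a level set of the logconcave distribution `π^X ∝ exp (-V)` of measure
`m < 1` contains a ball `B_r(x₀)`, then the level set `{x | V x - min V ≤ ℓ n}` with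
`ℓ = 5 + 13 log (e / (1 - m))` also contains `B_r(x₀)`. -/
theorem level_set_contains_ball (n : ℕ) (hn : 1 ≤ n)
    (V : EuclideanSpace ℝ (Fin n) → ℝ) (V₀ : ℝ)
    (hV : ConvexOn ℝ Set.univ V)
    (hmin : ∀ x, V₀ ≤ V x) (hatt : ∃ x, V x = V₀)
    (hInt : Integrable (fun x => Real.exp (-V x)))
    (πX : Measure (EuclideanSpace ℝ (Fin n)))
    (hπX : πX = ((volume.withDensity fun x => ENNReal.ofReal (Real.exp (-V x))) Set.univ)⁻¹ •
      volume.withDensity (fun x => ENNReal.ofReal (Real.exp (-V x))))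
    (m : ℝ) (hm : m < 1)
    (a : ℝ) (hma : πX {x | V x ≤ a} = ENNReal.ofReal m)
    (r : ℝ) (hr : 0 < r) (x₀ : EuclideanSpace ℝ (Fin n))
    (hball : Metric.ball x₀ r ⊆ {x | V x ≤ a}) :
    Metric.ball x₀ r ⊆
      {x | V x - V₀ ≤ (5 + 13 * Real.log (Real.exp 1 / (1 - m))) * n} :=
  level_set_contains_ball_general n hn V V₀ hV hatt hInt πX hπX m hm a hma r x₀ hball
end
end

section
/- Let K = {(x,t) ∈ ℝⁿ×ℝ : V(x) ≤ nt} for convex V with min V = V₀, and suppose the level set {x : V(x) - V₀ ≤ 10n} contains a unit ball B₁(x₀). Let α = n·e_{n+1}. Then for all s > 0, the blow-up K_s = {z : dist(z, K) ≤ s} satisfies ∫_{K_s} exp(-α·v) dv ≤ exp(13·s·n) · ∫_K exp(-α·v) dv. -/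
open MeasureTheory Set Metric
open scoped ENNReal

/-!
`K` contains the unit ball around `p = (x₀, V₀ / n + 11)`. A closed convex set containing
`B_r(p)` has its `s`-blow-up inside its image under the homothety of centre `p` and ratio
`1 + s / r`: a point at distance `≤ s` from `K` is a convex combination of its nearest point in
`K` and a point of `B_r(p)`. Changing variables costs the Jacobian `(1 + s)^(n+1) ≤ e^(2sn)`, and
since `t ≥ V₀ / n` on `K`, the homothety lowers the height `t` by at most `11 s`, which costs
`e^(11sn)` in the weight `e^(-nt)`.
-/

noncomputable section

def initCoords (n : ℕ) : EuclideanSpace ℝ (Fin (n + 1)) →ₗ[ℝ] EuclideanSpace ℝ (Fin n) where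
  toFun z := WithLp.toLp 2 (fun i => z i.castSucc)
  map_add' _ _ := rfl
  map_smul' _ _ := rfl

@[simp]
theorem initCoords_apply {n : ℕ} (z : EuclideanSpace ℝ (Fin (n + 1))) (i : Fin n) :
    initCoords n z i = z i.castSucc :=
  rfl

theorem dist_initCoords_le {n : ℕ} (z w : EuclideanSpace ℝ (Fin (n + 1))) :
    dist (initCoords n z) (initCoords n w) ≤ dist z w := by
  rw [EuclideanSpace.dist_eq, EuclideanSpace.dist_eq]
  refine Real.sqrt_le_sqrt ?_
  rw [Fin.sum_univ_castSucc]
  exact le_add_of_nonneg_right (sq_nonneg _)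

@[simp]
theorem initCoords_toLp_snoc {n : ℕ} (x : EuclideanSpace ℝ (Fin n)) (t : ℝ) :
    initCoords n (WithLp.toLp 2 (Fin.snoc (α := fun _ => ℝ) x t)) = x := by
  ext i; simp

def scaledEpigraph {n : ℕ} (V : EuclideanSpace ℝ (Fin n) → ℝ) (a : ℝ) :
    Set (EuclideanSpace ℝ (Fin (n + 1))) :=
  {z : EuclideanSpace ℝ (Fin (n + 1)) | V (initCoords n z) ≤ a * z (Fin.last n)}

section Epigraph

variable {n : ℕ} {V : EuclideanSpace ℝ (Fin n) → ℝ}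

theorem convex_scaledEpigraph (hV : ConvexOn ℝ univ V) (a : ℝ) :
    Convex ℝ (scaledEpigraph V a) := by
  have := hV.convex_epigraph.linear_preimage
    ((initCoords n).prod
      (a • (EuclideanSpace.proj (𝕜 := ℝ) (Fin.last n) : EuclideanSpace ℝ (Fin (n + 1)) →ₗ[ℝ] ℝ)))
  simpa [scaledEpigraph] using this

theorem isClosed_scaledEpigraph (hV : Continuous V) (a : ℝ) :
    IsClosed (scaledEpigraph V a) :=
  isClosed_le (hV.comp (initCoords n).continuous_of_finiteDimensional) (by fun_prop)

theorem closedBall_subset_scaledEpigraph (hV : Continuous V) {x₀ : EuclideanSpace ℝ (Fin n)}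
    {r c a : ℝ} (hr : 0 < r) (ha : 0 < a) (hball : ∀ x ∈ ball x₀ r, V x ≤ c) :
    closedBall (WithLp.toLp 2 (Fin.snoc (α := fun _ => ℝ) x₀ (c / a + r))) r
      ⊆ scaledEpigraph V a := by
  set p : EuclideanSpace ℝ (Fin (n + 1)) :=
    WithLp.toLp 2 (Fin.snoc (α := fun _ => ℝ) x₀ (c / a + r))
  have hclosed : closedBall x₀ r ⊆ {x | V x ≤ c} := by
    rw [← closure_ball x₀ hr.ne']
    exact closure_minimal hball (isClosed_le hV continuous_const)
  intro z hz
  have hVz : V (initCoords n z) ≤ c := by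
    refine hclosed (mem_closedBall.2 ?_)
    simpa [p] using (dist_initCoords_le z p).trans (mem_closedBall.1 hz)
  have hlast : c / a ≤ z (Fin.last n) := by
    have := (PiLp.dist_apply_le z p (Fin.last n)).trans (mem_closedBall.1 hz)
    simp only [p, Fin.snoc_last, Real.dist_eq] at this
    linarith [neg_abs_le (z (Fin.last n) - (c / a + r))]
  calc V (initCoords n z) ≤ c := hVz
    _ = a * (c / a) := (mul_div_cancel₀ c ha.ne').symm
    _ ≤ a * z (Fin.last n) := by gcongr

theorem div_le_last_of_mem_scaledEpigraph {V₀ a : ℝ} (hmin : ∀ x, V₀ ≤ V x) (ha : 0 < a)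
    {w : EuclideanSpace ℝ (Fin (n + 1))} (hw : w ∈ scaledEpigraph V a) :
    V₀ / a ≤ w (Fin.last n) :=
  (div_le_iff₀' ha).2 ((hmin _).trans hw)

end Epigraph

theorem one_add_pow_le_exp_mul {s : ℝ} (hs : 0 ≤ s) (k : ℕ) : (1 + s) ^ k ≤ Real.exp (s * k) :=
  calc (1 + s) ^ k ≤ Real.exp s ^ k := by
        gcongr; linarith [Real.add_one_le_exp s]
    _ = Real.exp (s * k) := by rw [← Real.exp_nat_mul, mul_comm]

theorem exp_neg_mul_homothety_le {m s h t t₀ : ℝ} (hm : 0 ≤ m) (hs : 0 ≤ s) (ht : t₀ - t ≤ h) :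
    Real.exp (-m * ((1 + s) * (t - t₀) + t₀)) ≤ Real.exp (m * s * h) * Real.exp (-m * t) := by
  rw [← Real.exp_add, Real.exp_le_exp]
  nlinarith [mul_le_mul_of_nonneg_left ht (mul_nonneg hm hs)]

theorem ofReal_pow_mul_exp_homothety_le {n : ℕ} (hn : 1 ≤ n) {s h : ℝ} (hs : 0 ≤ s)
    (p w : EuclideanSpace ℝ (Fin (n + 1))) (hw : p (Fin.last n) - w (Fin.last n) ≤ h) :
    ENNReal.ofReal ((1 + s) ^ (n + 1))
        * ENNReal.ofReal (Real.exp (-(n : ℝ) * AffineMap.homothety p (1 + s) w (Fin.last n)))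
      ≤ ENNReal.ofReal (Real.exp ((h + 2) * s * n))
        * ENNReal.ofReal (Real.exp (-(n : ℝ) * w (Fin.last n))) := by
  have hn1 : (1 : ℝ) ≤ n := by exact_mod_cast hn
  have hjac : (1 + s) ^ (n + 1) ≤ Real.exp (2 * s * n) :=
    (one_add_pow_le_exp_mul hs _).trans
      (Real.exp_le_exp.2 (by push_cast; nlinarith [mul_le_mul_of_nonneg_left hn1 hs]))
  have hlast : AffineMap.homothety p (1 + s) w (Fin.last n)
      = (1 + s) * (w (Fin.last n) - p (Fin.last n)) + p (Fin.last n) := by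
    simp [AffineMap.homothety_apply]; ring
  rw [hlast, ← ENNReal.ofReal_mul (by positivity), ← ENNReal.ofReal_mul (by positivity)]
  refine ENNReal.ofReal_le_ofReal ?_
  calc _ ≤ Real.exp (2 * s * n) * (Real.exp (n * s * h) * Real.exp (-n * w (Fin.last n))) :=
        mul_le_mul hjac (exp_neg_mul_homothety_le (by positivity) hs hw) (by positivity)
          (by positivity)
    _ = _ := by rw [← mul_assoc, ← Real.exp_add]; ring_nf

section Homothety

variable {E : Type*} [NormedAddCommGroup E] [NormedSpace ℝ E]

theorem infDist_le_subset_image_homothety [ProperSpace E] {K : Set E} (hKc : IsClosed K)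
    (hK : Convex ℝ K) {p : E} {r s : ℝ} (hr : 0 < r) (hs : 0 < s) (hball : closedBall p r ⊆ K) :
    {z | infDist z K ≤ s} ⊆ AffineMap.homothety p (1 + s / r) '' K := by
  intro z hz
  obtain ⟨a, haK, hza⟩ := hKc.exists_infDist_eq_dist ⟨p, hball (mem_closedBall_self hr.le)⟩ z
  have hza : ‖z - a‖ ≤ s := by rw [← dist_eq_norm, ← hza]; exact hz
  set k := p + (r / s) • (z - a)
  have hkK : k ∈ K := by
    refine hball (mem_closedBall.2 ?_)
    rw [dist_eq_norm, add_sub_cancel_left, norm_smul, Real.norm_of_nonneg (by positivity)]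
    calc r / s * ‖z - a‖ ≤ r / s * s := by gcongr
      _ = r := div_mul_cancel₀ r hs.ne'
  have hc : 0 < 1 + s / r := by positivity
  refine ⟨(1 + s / r)⁻¹ • a + (s / r / (1 + s / r)) • k,
    hK haK hkK (by positivity) (by positivity) (by field_simp), ?_⟩
  rw [AffineMap.homothety_apply, vsub_eq_sub, vadd_eq_add]
  match_scalars <;> field_simp <;> ring

variable [MeasurableSpace E] [BorelSpace E] [FiniteDimensional ℝ E] (μ : Measure E)
  [μ.IsAddHaarMeasure]

theorem setLIntegral_image_homothety {K : Set E} (hK : MeasurableSet K) (p : E) {c : ℝ}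
    (hc : c ≠ 0) (f : E → ℝ≥0∞) :
    ∫⁻ z in AffineMap.homothety p c '' K, f z ∂μ
      = ∫⁻ w in K, ENNReal.ofReal (|c| ^ Module.finrank ℝ E)
          * f (AffineMap.homothety p c w) ∂μ := by
  have hderiv (w : E) :
      HasFDerivAt (AffineMap.homothety p c) (c • ContinuousLinearMap.id ℝ E) w := by
    have : ⇑(AffineMap.homothety p c) = fun x => c • (x - p) + p :=
      funext fun x => by rw [AffineMap.homothety_apply, vsub_eq_sub, vadd_eq_add]
    rw [this]
    exact (((hasFDerivAt_id w).sub_const p).const_smul c).add_const p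
  rw [lintegral_image_eq_lintegral_abs_det_fderiv_mul μ hK
    (fun w _ => (hderiv w).hasFDerivWithinAt) (AffineMap.homothety_injective p hc).injOn]
  simp [ContinuousLinearMap.det, LinearMap.det_smul, abs_pow]

theorem setLIntegral_infDist_le_le {K : Set E} (hKc : IsClosed K) (hK : Convex ℝ K) {p : E}
    {r s : ℝ} (hr : 0 < r) (hs : 0 < s) (hball : closedBall p r ⊆ K) (f : E → ℝ≥0∞) :
    ∫⁻ z in {z | infDist z K ≤ s}, f z ∂μ
      ≤ ∫⁻ w in K, ENNReal.ofReal ((1 + s / r) ^ Module.finrank ℝ E)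
          * f (AffineMap.homothety p (1 + s / r) w) ∂μ := by
  have hc : 0 < 1 + s / r := by positivity
  calc ∫⁻ z in {z | infDist z K ≤ s}, f z ∂μ
      ≤ ∫⁻ z in AffineMap.homothety p (1 + s / r) '' K, f z ∂μ :=
        lintegral_mono_set (infDist_le_subset_image_homothety hKc hK hr hs hball)
    _ = _ := by
        rw [setLIntegral_image_homothety μ hKc.measurableSet p hc.ne', abs_of_pos hc]

end Homothety

theorem exp_blowup_growth_general (n : ℕ) (hn : 1 ≤ n)
    (V : EuclideanSpace ℝ (Fin n) → ℝ) (V₀ : ℝ)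
    (hV : ConvexOn ℝ Set.univ V)
    (hmin : ∀ x, V₀ ≤ V x)
    (x₀ : EuclideanSpace ℝ (Fin n))
    (hball : Metric.ball x₀ 1 ⊆ {x | V x - V₀ ≤ 10 * n})
    (K : Set (EuclideanSpace ℝ (Fin (n + 1))))
    (hK : K = {z | V (WithLp.toLp 2 (fun i => z i.castSucc)) ≤ (n : ℝ) * z (Fin.last n)})
    (s : ℝ) (hs : 0 < s) :
    (∫⁻ z in {z | Metric.infDist z K ≤ s},
        ENNReal.ofReal (Real.exp (-(n : ℝ) * z (Fin.last n))))
      ≤ ENNReal.ofReal (Real.exp (13 * s * n)) *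
        ∫⁻ z in K, ENNReal.ofReal (Real.exp (-(n : ℝ) * z (Fin.last n))) := by
  have hn0 : (0 : ℝ) < n := by exact_mod_cast hn
  have hVc : Continuous V := continuousOn_univ.mp (hV.continuousOn isOpen_univ)
  replace hK : K = scaledEpigraph V n := hK
  have hKc : IsClosed K := hK ▸ isClosed_scaledEpigraph hVc _
  -- `p = (x₀, V₀ / n + 11)`
  set p : EuclideanSpace ℝ (Fin (n + 1)) :=
    WithLp.toLp 2 (Fin.snoc (α := fun _ => ℝ) x₀ ((V₀ + 10 * n) / n + 1))
  have hpK : closedBall p 1 ⊆ K := hK ▸ closedBall_subset_scaledEpigraph hVc one_pos hn0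
    fun x hx => by linarith [show V x - V₀ ≤ 10 * n from hball hx]
  have hheight (w) (hw : w ∈ K) : p (Fin.last n) - w (Fin.last n) ≤ 11 := by
    have hw : V₀ / n ≤ w (Fin.last n) := div_le_last_of_mem_scaledEpigraph hmin hn0 (hK ▸ hw)
    have : (V₀ + 10 * n) / n = V₀ / n + 10 := by field_simp
    simp only [p, Fin.snoc_last]
    linarith
  calc _ ≤ _ := setLIntegral_infDist_le_le volume hKc (hK ▸ convex_scaledEpigraph hV _)
        one_pos hs hpK _
    _ ≤ ∫⁻ w in K, ENNReal.ofReal (Real.exp ((11 + 2) * s * n))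
          * ENNReal.ofReal (Real.exp (-(n : ℝ) * w (Fin.last n))) := by
        rw [div_one, finrank_euclideanSpace_fin]
        exact setLIntegral_mono' hKc.measurableSet fun w hw =>
          ofReal_pow_mul_exp_homothety_le hn hs.le p w (hheight w hw)
    _ = _ := by norm_num [lintegral_const_mul' _ _ ENNReal.ofReal_ne_top]

/-- Let `K = {(x,t) : V x ≤ n t} ⊆ ℝ^{n+1}` for convex `V` with `min V = V₀`,
and suppose the level set `{V ≤ V₀ + 10 n}` contains a unit ball `B₁(x₀)`. Then for all `s > 0`,
the blow-up `K_s = {z : dist(z, K) ≤ s}` satisfies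
`∫_{K_s} exp(-n t) ≤ exp(13 s n) ∫_K exp(-n t)`. -/
theorem exp_blowup_growth (n : ℕ) (hn : 1 ≤ n)
    (V : EuclideanSpace ℝ (Fin n) → ℝ) (V₀ : ℝ)
    (hV : ConvexOn ℝ Set.univ V)
    (hmin : ∀ x, V₀ ≤ V x) (hatt : ∃ x, V x = V₀)
    (hInt : Integrable (fun x => Real.exp (-V x)))
    (x₀ : EuclideanSpace ℝ (Fin n))
    (hball : Metric.ball x₀ 1 ⊆ {x | V x - V₀ ≤ 10 * n})
    (K : Set (EuclideanSpace ℝ (Fin (n + 1))))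
    (hK : K = {z | V (WithLp.toLp 2 (fun i => z i.castSucc)) ≤ (n : ℝ) * z (Fin.last n)})
    (s : ℝ) (hs : 0 < s) :
    (∫⁻ z in {z | Metric.infDist z K ≤ s},
        ENNReal.ofReal (Real.exp (-(n : ℝ) * z (Fin.last n))))
      ≤ ENNReal.ofReal (Real.exp (13 * s * n)) *
        ∫⁻ z in K, ENNReal.ofReal (Real.exp (-(n : ℝ) * z (Fin.last n))) :=
  exp_blowup_growth_general n hn V V₀ hV hmin x₀ hball K hK s hs
end
end

section
/- Suppose a logconcave probability density on ℝⁿ proportional to e^{-V} is isotropic (zero mean, identity covariance). Then for V₀ = min V and any c > 0, every point x with V(x) - V₀ ≤ c·n satisfies ‖x‖ ≤ 8·e^{c+1}·n. -/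
/-!
Suppose `‖x‖` were large. Contracting space towards `x` by the ratio `a = n / (n + 1)` maps the
half-space `{⟪u, ·⟫ > -2}`, `u = x / ‖x‖`, which carries probability at least `3 / 4` by Chebyshev,
into the far half-space `{⟪u, ·⟫ ≥ ‖x‖ / (n + 1) - 2}`. Convexity of `V` says the contraction
lowers the density by at most the factor `e^{-(V x - V₀) / (n + 1)} ≥ e^{-c}`, and it shrinks
volume by `aⁿ ≥ 1 / e`, so the far half-space has probability at least `3 / (4 e^{c + 1})`.
Chebyshev again bounds that probability by `(‖x‖ / (n + 1) - 2)⁻²`, which is too small once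
`‖x‖ > 8 e^{c + 1} n`.
-/

open MeasureTheory Set Real Module
open scoped ENNReal RealInnerProductSpace

theorem measureReal_le_le_integral_sq_div {Ω : Type*} [MeasurableSpace Ω] {μ : Measure Ω}
    [IsFiniteMeasure μ] {f : Ω → ℝ} (hf : Integrable (fun x => f x ^ 2) μ) {t : ℝ} (ht : 0 < t) :
    μ.real {x | t ≤ f x} ≤ (∫ x, f x ^ 2 ∂μ) / t ^ 2 := by
  rw [le_div_iff₀ (by positivity), mul_comm]
  calc t ^ 2 * μ.real {x | t ≤ f x} ≤ t ^ 2 * μ.real {x | t ^ 2 ≤ f x ^ 2} :=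
        mul_le_mul_of_nonneg_left
          (measureReal_mono fun x (hx : t ≤ f x) => show t ^ 2 ≤ f x ^ 2 from
            pow_le_pow_left₀ ht.le hx 2) (sq_nonneg t)
    _ ≤ ∫ x, f x ^ 2 ∂μ :=
        mul_meas_ge_le_integral_of_nonneg (ae_of_all _ fun x => sq_nonneg _) hf _

section UnitSecondMoment

variable {Ω : Type*} [MeasurableSpace Ω] {μ : Measure Ω} [IsProbabilityMeasure μ] {f : Ω → ℝ}

theorem measureReal_le_le_one_div_sq (hf : ∫ x, f x ^ 2 ∂μ = 1) {t : ℝ} (ht : 0 < t) :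
    μ.real {x | t ≤ f x} ≤ 1 / t ^ 2 :=
  hf ▸ measureReal_le_le_integral_sq_div (.of_integral_ne_zero (by simp [hf])) ht

theorem three_div_four_le_measureReal_neg_two_lt (hf : ∫ x, f x ^ 2 ∂μ = 1)
    (hfm : Measurable f) : 3 / 4 ≤ μ.real {x | -2 < f x} := by
  have htail : μ.real {x | 2 ≤ -f x} ≤ 1 / 2 ^ 2 :=
    measureReal_le_le_one_div_sq (f := fun x => -f x) (by simpa using hf) two_pos
  have hcompl : {x | 2 ≤ -f x} = {x | -2 < f x}ᶜ := by
    ext x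
    simp [le_neg, not_lt]
  rw [hcompl, probReal_compl_eq_one_sub (measurableSet_lt measurable_const hfm)] at htail
  linarith

end UnitSecondMoment

theorem isProbabilityMeasure_inv_smul_withDensity_exp_neg {α : Type*} [MeasurableSpace α]
    {μ : Measure α} [NeZero μ] {V : α → ℝ} (hV : Integrable (fun x => exp (-V x)) μ) :
    IsProbabilityMeasure
      (((μ.withDensity fun x => ENNReal.ofReal (exp (-V x))) univ)⁻¹ •
        μ.withDensity fun x => ENNReal.ofReal (exp (-V x))) := by
  have : IsFiniteMeasure (μ.withDensity fun x => ENNReal.ofReal (exp (-V x))) :=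
    isFiniteMeasure_withDensity_ofReal hV.2
  have : NeZero (μ.withDensity fun x => ENNReal.ofReal (exp (-V x))) := by
    refine ⟨fun h => NeZero.ne μ (ae_eq_bot.mp (Filter.eventually_false_iff_eq_bot.mp ?_))⟩
    rw [withDensity_eq_zero_iff hV.1.aemeasurable.ennreal_ofReal] at h
    exact h.mono fun x hx => (exp_pos (-V x)).not_ge (by simpa using hx)
  infer_instance

theorem ConvexOn.apply_smul_add_one_sub_smul_le {E : Type*} [AddCommGroup E] [Module ℝ E]
    {V : E → ℝ} (hV : ConvexOn ℝ univ V) {V₀ : ℝ} (hV₀ : ∀ x, V₀ ≤ V x) {a : ℝ} (ha₀ : 0 ≤ a)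
    (ha₁ : a ≤ 1) (y z : E) :
    V (a • y + (1 - a) • z) ≤ V y + (1 - a) * (V z - V₀) := by
  have hconv := hV.2 (mem_univ y) (mem_univ z) ha₀ (sub_nonneg.2 ha₁) (by ring)
  have := mul_le_mul_of_nonneg_left (hV₀ y) (sub_nonneg.2 ha₁)
  simp only [smul_eq_mul] at hconv
  linarith

theorem exp_neg_one_le_div_add_one_pow (n : ℕ) : exp (-1) ≤ ((n : ℝ) / (n + 1)) ^ n := by
  rcases n.eq_zero_or_pos with rfl | hn
  · simp
  have hdiv : (n : ℝ) / (n + 1) = (1 + (n : ℝ)⁻¹)⁻¹ := by field_simp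
  rw [hdiv, inv_pow, exp_neg]
  exact inv_anti₀ (by positivity) one_add_inv_pow_le_exp

theorem one_div_sq_lt_three_div_four_mul_inv {E t : ℝ} (hE : 1 ≤ E) (ht : 2 * E ≤ t) :
    1 / t ^ 2 < 3 / 4 * E⁻¹ := by
  have hE₀ : 0 < E := by linarith
  have htsq : 4 * E ^ 2 ≤ t ^ 2 := by nlinarith
  rw [div_lt_iff₀ (by nlinarith), ← div_eq_mul_inv, div_mul_eq_mul_div, lt_div_iff₀ hE₀]
  nlinarith

section AddHaar

variable {E : Type*} [NormedAddCommGroup E] [NormedSpace ℝ E] [FiniteDimensional ℝ E]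
  [MeasurableSpace E] [BorelSpace E] (μ : Measure E) [μ.IsAddHaarMeasure]

theorem lintegral_image_smul_add {S : Set E} (hS : MeasurableSet S) {a : ℝ} (ha : a ≠ 0) (b : E)
    (g : E → ℝ≥0∞) :
    ∫⁻ x in (fun y => a • y + b) '' S, g x ∂μ
      = ENNReal.ofReal (|a| ^ finrank ℝ E) * ∫⁻ y in S, g (a • y + b) ∂μ := by
  rw [lintegral_image_eq_lintegral_abs_det_fderiv_mul μ hS (f := fun y => a • y + b)
    (f' := fun _ => a • ContinuousLinearMap.id ℝ E)
    (fun y _ => (((hasFDerivAt_id y).const_smul a).add_const b).hasFDerivWithinAt)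
    (fun y _ z _ h => smul_right_injective E ha (add_right_cancel h)),
    lintegral_const_mul' _ _ ENNReal.ofReal_ne_top]
  simp [ContinuousLinearMap.det, LinearMap.det_smul, abs_pow]

theorem ConvexOn.mul_smul_withDensity_exp_neg_le_image {V : E → ℝ} (hV : ConvexOn ℝ univ V)
    {V₀ : ℝ} (hV₀ : ∀ x, V₀ ≤ V x) (z : E) {a : ℝ} (ha₀ : 0 < a) (ha₁ : a ≤ 1) {S : Set E}
    (hS : MeasurableSet S) (r : ℝ≥0∞) :
    ENNReal.ofReal (a ^ finrank ℝ E * exp (-((1 - a) * (V z - V₀)))) *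
        (r • μ.withDensity fun x => ENNReal.ofReal (exp (-V x))) S ≤
      (r • μ.withDensity fun x => ENNReal.ofReal (exp (-V x)))
        ((fun y => a • y + (1 - a) • z) '' S) := by
  set δ := (1 - a) * (V z - V₀)
  have hdensity : ∀ y, ENNReal.ofReal (exp (-δ)) * ENNReal.ofReal (exp (-V y)) ≤
      ENNReal.ofReal (exp (-V (a • y + (1 - a) • z))) := by
    intro y
    rw [← ENNReal.ofReal_mul (exp_pos _).le, ← exp_add]
    gcongr
    linarith [hV.apply_smul_add_one_sub_smul_le hV₀ ha₀.le ha₁ y z]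
  simp only [Measure.smul_apply, smul_eq_mul, withDensity_apply' _]
  rw [lintegral_image_smul_add μ hS ha₀.ne', abs_of_pos ha₀]
  calc _ = r * (ENNReal.ofReal (a ^ finrank ℝ E) *
        ∫⁻ y in S, ENNReal.ofReal (exp (-δ)) * ENNReal.ofReal (exp (-V y)) ∂μ) := by
        rw [lintegral_const_mul' _ _ ENNReal.ofReal_ne_top, ENNReal.ofReal_mul (by positivity)]
        ring
    _ ≤ _ := by gcongr with y; exact hdensity y

end AddHaar

theorem ConvexOn.mul_three_div_four_le_measureReal_inner_ge {E : Type*} [NormedAddCommGroup E]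
    [InnerProductSpace ℝ E] [FiniteDimensional ℝ E] [MeasurableSpace E] [BorelSpace E]
    (μ : Measure E) [μ.IsAddHaarMeasure] {V : E → ℝ} (hV : ConvexOn ℝ univ V) {V₀ : ℝ}
    (hV₀ : ∀ x, V₀ ≤ V x) {P : Measure E} [IsProbabilityMeasure P] {r : ℝ≥0∞}
    (hP : P = r • μ.withDensity fun x => ENNReal.ofReal (exp (-V x))) {u : E}
    (hu : ∫ y, ⟪u, y⟫ ^ 2 ∂P = 1) (z : E) {a : ℝ} (ha₀ : 0 < a) (ha₁ : a ≤ 1) :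
    a ^ finrank ℝ E * exp (-((1 - a) * (V z - V₀))) * (3 / 4) ≤
      P.real {y | (1 - a) * ⟪u, z⟫ - 2 ≤ ⟪u, y⟫} := by
  set S := {y | -2 < ⟪u, y⟫}
  have hS : MeasurableSet S := measurableSet_lt measurable_const (by fun_prop)
  have himage : (fun y => a • y + (1 - a) • z) '' S ⊆
      {y | (1 - a) * ⟪u, z⟫ - 2 ≤ ⟪u, y⟫} := by
    rintro _ ⟨y, hy : -2 < ⟪u, y⟫, rfl⟩
    show (1 - a) * ⟪u, z⟫ - 2 ≤ ⟪u, a • y + (1 - a) • z⟫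
    rw [inner_add_right, real_inner_smul_right, real_inner_smul_right]
    nlinarith
  have hmass := hV.mul_smul_withDensity_exp_neg_le_image μ hV₀ z ha₀ ha₁ hS r
  rw [← hP] at hmass
  calc a ^ finrank ℝ E * exp (-((1 - a) * (V z - V₀))) * (3 / 4)
      ≤ a ^ finrank ℝ E * exp (-((1 - a) * (V z - V₀))) * P.real S := by
        gcongr
        exact three_div_four_le_measureReal_neg_two_lt hu (by fun_prop)
    _ = (ENNReal.ofReal (a ^ finrank ℝ E * exp (-((1 - a) * (V z - V₀)))) * P S).toReal := by
        rw [ENNReal.toReal_mul, ENNReal.toReal_ofReal (by positivity), measureReal_def]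
    _ ≤ P.real ((fun y => a • y + (1 - a) • z) '' S) :=
        ENNReal.toReal_mono (measure_ne_top _ _) hmass
    _ ≤ P.real {y | (1 - a) * ⟪u, z⟫ - 2 ≤ ⟪u, y⟫} := measureReal_mono himage

theorem diameter_of_level_sets_general (n : ℕ) (hn : 1 ≤ n)
    (V : EuclideanSpace ℝ (Fin n) → ℝ) (V₀ : ℝ)
    (hV : ConvexOn ℝ Set.univ V)
    (hmin : ∀ x, V₀ ≤ V x)
    (hInt : Integrable (fun x => Real.exp (-V x)))
    (P : Measure (EuclideanSpace ℝ (Fin n)))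
    (hP : P = ((volume.withDensity fun x => ENNReal.ofReal (Real.exp (-V x))) Set.univ)⁻¹ •
      volume.withDensity (fun x => ENNReal.ofReal (Real.exp (-V x))))
    (hcov : ∀ v : EuclideanSpace ℝ (Fin n), (∫ x, (inner ℝ v x : ℝ) ^ 2 ∂P) = ‖v‖ ^ 2)
    (c : ℝ) (hc : 0 < c) :
    ∀ x : EuclideanSpace ℝ (Fin n), V x - V₀ ≤ c * n → ‖x‖ ≤ 8 * Real.exp (c + 1) * n := by
  intro x hx
  by_contra! hfar
  have hx₀ : 0 < ‖x‖ := lt_of_le_of_lt (by positivity) hfar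
  have : IsProbabilityMeasure P := hP ▸ isProbabilityMeasure_inv_smul_withDensity_exp_neg hInt
  have hmoment : ∫ y, ⟪‖x‖⁻¹ • x, y⟫ ^ 2 ∂P = 1 := by
    rw [hcov, norm_smul, norm_inv, norm_norm, inv_mul_cancel₀ hx₀.ne', one_pow]
  set a : ℝ := n / (n + 1)
  have hn' : (1 : ℝ) ≤ n := by exact_mod_cast hn
  have ha₀ : 0 < a := by positivity
  have ha₁ : a < 1 := (div_lt_one (by positivity)).2 (by linarith)
  have ha : (1 - a) * n = a := by simp only [a]; field_simp; ring
  have hlower := hV.mul_three_div_four_le_measureReal_inner_ge volume hmin hP hmoment x ha₀ ha₁.le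
  rw [finrank_euclideanSpace_fin, real_inner_smul_left, real_inner_self_eq_norm_sq, sq,
    inv_mul_cancel_left₀ hx₀.ne'] at hlower
  have hk : exp (-(c + 1)) ≤ a ^ n * exp (-((1 - a) * (V x - V₀))) := by
    have hshift : (1 - a) * (V x - V₀) ≤ c := by
      nlinarith [mul_le_mul_of_nonneg_left hx (sub_nonneg.2 ha₁.le)]
    rw [neg_add, exp_add, mul_comm]
    gcongr
    exact exp_neg_one_le_div_add_one_pow n
  have ht : 2 * exp (c + 1) ≤ (1 - a) * ‖x‖ - 2 := by
    nlinarith [mul_lt_mul_of_pos_left hfar (sub_pos.2 ha₁), one_le_exp (by linarith : 0 ≤ c + 1)]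
  have hupper := measureReal_le_le_one_div_sq hmoment
    (by linarith [exp_pos (c + 1)] : 0 < (1 - a) * ‖x‖ - 2)
  have hsmall := one_div_sq_lt_three_div_four_mul_inv (one_le_exp (by linarith)) ht
  rw [← exp_neg] at hsmall
  linarith

/-- If the logconcave probability density proportional to `exp (-V)` on `ℝⁿ` is
isotropic (zero mean, identity covariance), then for `V₀ = min V` and any `c > 0`, every point `x`
with `V x - V₀ ≤ c n` satisfies `‖x‖ ≤ 8 e^{c+1} n`. -/
theorem diameter_of_level_sets (n : ℕ) (hn : 1 ≤ n)
    (V : EuclideanSpace ℝ (Fin n) → ℝ) (V₀ : ℝ)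
    (hV : ConvexOn ℝ Set.univ V)
    (hmin : ∀ x, V₀ ≤ V x) (hatt : ∃ x, V x = V₀)
    (hInt : Integrable (fun x => Real.exp (-V x)))
    (P : Measure (EuclideanSpace ℝ (Fin n)))
    (hP : P = ((volume.withDensity fun x => ENNReal.ofReal (Real.exp (-V x))) Set.univ)⁻¹ •
      volume.withDensity (fun x => ENNReal.ofReal (Real.exp (-V x))))
    (hmean : (∫ x, x ∂P) = 0)
    (hcov : ∀ v : EuclideanSpace ℝ (Fin n), (∫ x, (inner ℝ v x : ℝ) ^ 2 ∂P) = ‖v‖ ^ 2)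
    (c : ℝ) (hc : 0 < c) :
    ∀ x : EuclideanSpace ℝ (Fin n), V x - V₀ ≤ c * n → ‖x‖ ≤ 8 * Real.exp (c + 1) * n :=
  diameter_of_level_sets_general n hn V V₀ hV hmin hInt P hP hcov c hc
end

section
/- Let f : ℝ → ℝ_{≥0} be an isotropic logconcave probability density (mean 0, variance 1). Then f(0) ≥ 1/8. -/
/-!
Log-concavity makes `f` unimodal, so after the reflection `x ↦ -x` we may assume `f ≤ f 0` on
`(-∞, 0]`. If `f u = f 0 * exp (s * u)` with `u, s > 0`, the chord of `log f` through `0` and `u`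
puts `f` below `f 0 * exp (s * x)` on `(-∞, 0]` and above it on `[0, u]`; comparing the two halves
of the mean `∫ x f = 0` forces `s * u ≤ 1`, so `f ≤ e * f 0` on `[0, ∞)`. Finally
`∫ (4 - x²) f = 3` is at most what these caps allow on `[-2, 2]`, namely `16/3 * (1 + e) * f 0`,
whence `f 0 ≥ 9 / 64`.
-/

open MeasureTheory Set Real

theorem integral_Iic_neg_mul_exp_mul {s : ℝ} (hs : 0 < s) :
    ∫ x in Iic 0, -x * exp (s * x) = 1 / s ^ 2 := by
  have h := integral_comp_neg_Iic 0 fun t ↦ t ^ ((2 : ℝ) - 1) * exp (-(s * t))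
  rw [neg_zero, integral_rpow_mul_exp_neg_mul_Ioi two_pos hs, Gamma_two] at h
  convert h using 2 <;> norm_num

theorem integrableOn_Iic_neg_mul_exp_mul {s : ℝ} (hs : 0 < s) :
    IntegrableOn (fun x ↦ -x * exp (s * x)) (Iic 0) :=
  .of_integral_ne_zero <| by rw [integral_Iic_neg_mul_exp_mul hs]; positivity

theorem integral_mul_exp_mul {s : ℝ} (hs : s ≠ 0) (u : ℝ) :
    ∫ x in 0..u, x * exp (s * x) = ((s * u - 1) * exp (s * u) + 1) / s ^ 2 := by
  have hderiv (x : ℝ) : HasDerivAt (fun x ↦ (s * x - 1) * exp (s * x) / s ^ 2)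
      (x * exp (s * x)) x := by
    have hlin : HasDerivAt (fun x ↦ s * x) s x := by simpa using (hasDerivAt_id' x).const_mul s
    refine ((hlin.sub_const 1).mul hlin.exp).div_const (s ^ 2) |>.congr_deriv ?_
    field_simp
    ring
  rw [intervalIntegral.integral_eq_sub_of_hasDerivAt (fun x _ ↦ hderiv x)
    ((by fun_prop : Continuous _).intervalIntegrable _ _)]
  simp only [mul_zero, zero_sub, exp_zero, mul_one]
  ring

theorem integrable_mul_of_integrable_sq_mul {f : ℝ → ℝ} (hnn : ∀ x, 0 ≤ f x) (hf : Integrable f)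
    (hf₂ : Integrable fun x ↦ x ^ 2 * f x) : Integrable fun x ↦ x * f x := by
  refine (hf.add hf₂).mono' (continuous_id.aestronglyMeasurable.mul hf.1) (ae_of_all _ fun x ↦ ?_)
  rw [norm_mul, Real.norm_of_nonneg (hnn x), Pi.add_apply, Real.norm_eq_abs]
  nlinarith [hnn x, sq_abs x, sq_nonneg (|x| - 1)]

theorem integral_eq_zero_of_eq_zero_on_Iic {f : ℝ → ℝ} (hnn : ∀ x, 0 ≤ f x)
    (hleft : ∀ x ≤ 0, f x = 0) (hint : Integrable fun x ↦ x * f x)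
    (hmean : ∫ x, x * f x = 0) : ∫ x, f x = 0 := by
  have hxf_nonneg : 0 ≤ fun x ↦ x * f x := fun x ↦ by
    rcases le_or_gt x 0 with hx | hx
    · simp [hleft x hx]
    · exact mul_nonneg hx.le (hnn x)
  have hxf := (integral_eq_zero_iff_of_nonneg hxf_nonneg hint).1 hmean
  have hf : f =ᵐ[volume] 0 := hxf.mono fun x hx ↦ by
    rcases mul_eq_zero.1 hx with rfl | h
    · exact hleft 0 le_rfl
    · exact h
  simp [integral_congr_ae hf]

theorem mul_le_one_of_le_exp_on_Iic_of_exp_le_on_Icc {f : ℝ → ℝ} {c s u : ℝ}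
    (hnn : ∀ x, 0 ≤ f x) (hint : Integrable fun x ↦ x * f x) (hmean : ∫ x, x * f x = 0)
    (hc : 0 < c) (hs : 0 < s) (hu : 0 < u) (hleft : ∀ x ≤ 0, f x ≤ c * exp (s * x))
    (hmid : ∀ x ∈ Icc 0 u, c * exp (s * x) ≤ f x) : s * u ≤ 1 := by
  have hbalance : ∫ x in Ioi 0, x * f x = ∫ x in Iic 0, -x * f x := by
    have h := integral_add_compl (measurableSet_Iic (a := (0 : ℝ))) hint
    rw [compl_Iic, hmean] at h
    simp only [neg_mul, integral_neg]
    linarith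
  have hneg : ∫ x in Iic 0, -x * f x ≤ c / s ^ 2 :=
    calc ∫ x in Iic 0, -x * f x ≤ ∫ x in Iic 0, c * (-x * exp (s * x)) := by
          refine setIntegral_mono_on (by simpa using hint.neg.integrableOn)
            ((integrableOn_Iic_neg_mul_exp_mul hs).const_mul _) measurableSet_Iic fun x hx ↦ ?_
          rw [mul_left_comm]
          exact mul_le_mul_of_nonneg_left (hleft x hx) (neg_nonneg.2 hx)
      _ = c / s ^ 2 := by rw [integral_const_mul, integral_Iic_neg_mul_exp_mul hs]; ring
  have hpos : c * (((s * u - 1) * exp (s * u) + 1) / s ^ 2) ≤ ∫ x in Ioi 0, x * f x :=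
    calc c * (((s * u - 1) * exp (s * u) + 1) / s ^ 2)
        = ∫ x in 0..u, x * (c * exp (s * x)) := by
          simp only [mul_left_comm _ c, intervalIntegral.integral_const_mul,
            integral_mul_exp_mul hs.ne']
      _ ≤ ∫ x in 0..u, x * f x :=
          intervalIntegral.integral_mono_on hu.le
            ((continuous_id.mul (by fun_prop)).intervalIntegrable _ _) hint.intervalIntegrable
            fun x hx ↦ mul_le_mul_of_nonneg_left (hmid x hx) hx.1
      _ ≤ ∫ x in Ioi 0, x * f x := by
          rw [intervalIntegral.integral_of_le hu.le]
          exact setIntegral_mono_set hint.integrableOn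
            ((ae_restrict_iff' measurableSet_Ioi).2 (ae_of_all _ fun x hx ↦
              mul_nonneg hx.le (hnn x)))
            Ioc_subset_Ioi_self.eventuallyLE
  have h := hpos.trans (hbalance ▸ hneg)
  rw [mul_div_assoc', div_le_div_iff_of_pos_right (by positivity)] at h
  nlinarith [mul_pos hc (exp_pos (s * u))]

theorem nine_div_sixteen_le_add_of_le_on_Iic_of_le_on_Ici {f : ℝ → ℝ} {a b : ℝ}
    (hnn : ∀ x, 0 ≤ f x) (hprob : ∫ x, f x = 1) (hvar : ∫ x, x ^ 2 * f x = 1)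
    (ha : ∀ x ≤ 0, f x ≤ a) (hb : ∀ x, 0 ≤ x → f x ≤ b) : 9 / 16 ≤ a + b := by
  have hf : Integrable f := .of_integral_ne_zero (by simp [hprob])
  have hf₂ : Integrable fun x ↦ x ^ 2 * f x := .of_integral_ne_zero (by simp [hvar])
  have hg : Integrable fun x ↦ (4 - x ^ 2) * f x := by
    simpa only [sub_mul] using (hf.const_mul 4).sub' hf₂
  have hg_int : ∫ x, (4 - x ^ 2) * f x = 3 := by
    simp only [sub_mul]
    rw [integral_sub (hf.const_mul 4) hf₂, integral_const_mul, hprob, hvar]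
    norm_num
  have hloc : ∫ x, (4 - x ^ 2) * f x ≤ ∫ x in -2..2, (4 - x ^ 2) * f x := by
    rw [intervalIntegral.integral_of_le (by norm_num), ← integral_indicator measurableSet_Ioc]
    refine integral_mono hg (hg.indicator measurableSet_Ioc) fun x ↦ ?_
    by_cases hx : x ∈ Ioc (-2) 2
    · simp [hx]
    · have : 4 - x ^ 2 ≤ 0 := by
        simp only [mem_Ioc, not_and_or, not_lt, not_le] at hx
        rcases hx with hx | hx <;> nlinarith
      simpa [hx] using mul_nonpos_of_nonpos_of_nonneg this (hnn x)
  have hbound {l r c : ℝ} (hlr : l ≤ r) (hl : -2 ≤ l) (hr : r ≤ 2)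
      (hc : ∀ x ∈ Icc l r, f x ≤ c) :
      ∫ x in l..r, (4 - x ^ 2) * f x ≤ ∫ x in l..r, (4 - x ^ 2) * c :=
    intervalIntegral.integral_mono_on hlr hg.intervalIntegrable
      ((by fun_prop : Continuous fun x : ℝ ↦ (4 - x ^ 2) * c).intervalIntegrable _ _) fun x hx ↦
        mul_le_mul_of_nonneg_left (hc x hx) (by nlinarith [hx.1, hx.2])
  have hL := hbound (by norm_num) le_rfl (by norm_num) fun x hx ↦ ha x hx.2
  have hR := hbound (by norm_num) (by norm_num) le_rfl fun x hx ↦ hb x hx.1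
  rw [← intervalIntegral.integral_add_adjacent_intervals (b := 0) hg.intervalIntegrable
    hg.intervalIntegrable] at hloc
  have hL_val : ∫ x in (-2 : ℝ)..0, (4 - x ^ 2) = 16 / 3 := by norm_num [integral_pow]
  have hR_val : ∫ x in (0 : ℝ)..2, (4 - x ^ 2) = 16 / 3 := by norm_num [integral_pow]
  rw [intervalIntegral.integral_mul_const, hL_val] at hL
  rw [intervalIntegral.integral_mul_const, hR_val] at hR
  linarith

def IsLogConcave (f : ℝ → ℝ) : Prop :=
  ∀ x y θ : ℝ, 0 ≤ θ → θ ≤ 1 → f x ^ θ * f y ^ (1 - θ) ≤ f (θ * x + (1 - θ) * y)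

namespace IsLogConcave

variable {f : ℝ → ℝ}

theorem comp_neg (hf : IsLogConcave f) : IsLogConcave fun x ↦ f (-x) := by
  intro x y θ hθ₀ hθ₁
  convert hf (-x) (-y) θ hθ₀ hθ₁ using 2
  ring

theorem min_le (hf : IsLogConcave f) (hnn : ∀ x, 0 ≤ f x) {a m b : ℝ} (ham : a ≤ m)
    (hmb : m ≤ b) : min (f a) (f b) ≤ f m := by
  rcases ham.eq_or_lt with rfl | ham
  · exact min_le_left _ _
  set θ := (b - m) / (b - a) with hθ_def
  have hba : 0 < b - a := by linarith
  have hθ₀ : 0 ≤ θ := div_nonneg (by linarith) hba.le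
  have hθ₁ : θ ≤ 1 := (div_le_one hba).2 (by linarith)
  have hm : θ * a + (1 - θ) * b = m := by rw [hθ_def]; field_simp; ring
  have hmin := le_min (hnn a) (hnn b)
  calc min (f a) (f b) = min (f a) (f b) ^ θ * min (f a) (f b) ^ (1 - θ) := by
        rw [← rpow_add' hmin (by norm_num), add_sub_cancel, rpow_one]
    _ ≤ f a ^ θ * f b ^ (1 - θ) :=
        mul_le_mul (rpow_le_rpow hmin (min_le_left _ _) hθ₀)
          (rpow_le_rpow hmin (min_le_right _ _) (by linarith)) (by positivity)
          (rpow_nonneg (hnn a) _)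
    _ ≤ f m := hm ▸ hf a b θ hθ₀ hθ₁

theorem le_on_Iic_or_le_on_Ici (hf : IsLogConcave f) (hnn : ∀ x, 0 ≤ f x) (m : ℝ) :
    (∀ x ≤ m, f x ≤ f m) ∨ ∀ x, m ≤ x → f x ≤ f m := by
  by_contra! ⟨⟨a, ham, ha⟩, b, hmb, hb⟩
  exact (lt_min ha hb).not_ge (hf.min_le hnn ham hmb)

theorem exp_mul_le_of_mem_Icc (hf : IsLogConcave f) (h0 : 0 < f 0) {u s : ℝ} (hu : 0 < u)
    (hfu : f u = f 0 * exp (s * u)) {x : ℝ} (hx : x ∈ Icc 0 u) :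
    f 0 * exp (s * x) ≤ f x := by
  set θ := x / u with hθ_def
  have hθx : θ * u + (1 - θ) * 0 = x := by rw [hθ_def]; field_simp; ring
  calc f 0 * exp (s * x) = (f 0 * exp (s * u)) ^ θ * f 0 ^ (1 - θ) := by
        rw [mul_rpow h0.le (exp_pos _).le, ← exp_mul, mul_right_comm,
          ← rpow_add' h0.le (by norm_num), add_sub_cancel, rpow_one, mul_assoc, ← hθx]
        ring_nf
    _ ≤ f x := hfu ▸ hθx ▸ hf u 0 θ (div_nonneg hx.1 hu.le) ((div_le_one hu).2 hx.2)

theorem le_exp_mul_of_nonpos (hf : IsLogConcave f) (hnn : ∀ x, 0 ≤ f x) (h0 : 0 < f 0)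
    {u s : ℝ} (hu : 0 < u) (hfu : f u = f 0 * exp (s * u)) {x : ℝ} (hx : x ≤ 0) :
    f x ≤ f 0 * exp (s * x) := by
  set θ := u / (u - x) with hθ_def
  have hux : 0 < u - x := by linarith
  have hθ₀ : 0 < θ := div_pos hu hux
  have hθ : θ * x + (1 - θ) * u = 0 := by rw [hθ_def]; field_simp; ring
  have h := hf x u θ hθ₀.le ((div_le_one hux).2 (by linarith))
  rw [hθ, hfu, mul_rpow h0.le (exp_pos _).le, ← exp_mul] at h
  have hpow : f x ^ θ ≤ (f 0 * exp (s * x)) ^ θ := by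
    rw [mul_rpow h0.le (exp_pos _).le, ← exp_mul]
    have hpos : 0 < f 0 ^ (1 - θ) * exp (s * u * (1 - θ)) := by positivity
    refine le_of_mul_le_mul_right (h.trans_eq ?_) hpos
    rw [show s * u * (1 - θ) = -(s * x * θ) by linear_combination s * hθ, exp_neg,
      mul_mul_mul_comm, ← rpow_add' h0.le (by norm_num), add_sub_cancel, rpow_one,
      mul_inv_cancel₀ (exp_pos _).ne', mul_one]
  exact (rpow_le_rpow_iff (hnn x) (by positivity) hθ₀).1 hpow

theorem le_exp_one_mul_of_nonneg (hf : IsLogConcave f) (hnn : ∀ x, 0 ≤ f x)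
    (hint : Integrable fun x ↦ x * f x) (hmean : ∫ x, x * f x = 0) (h0 : 0 < f 0) {u : ℝ}
    (hu : 0 ≤ u) : f u ≤ exp 1 * f 0 := by
  rcases le_or_gt (f u) (f 0) with hle | hlt
  · nlinarith [add_one_le_exp 1]
  have hu : 0 < u := hu.lt_of_ne (by rintro rfl; exact hlt.false)
  set s := log (f u / f 0) / u with hs_def
  have hs : 0 < s := div_pos (log_pos ((one_lt_div h0).2 hlt)) hu
  have hfu : f u = f 0 * exp (s * u) := by
    rw [hs_def, div_mul_cancel₀ _ hu.ne', exp_log (div_pos (h0.trans hlt) h0)]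
    field_simp
  have hsu : s * u ≤ 1 := mul_le_one_of_le_exp_on_Iic_of_exp_le_on_Icc hnn hint hmean h0 hs hu
    (fun x ↦ hf.le_exp_mul_of_nonpos hnn h0 hu hfu) (fun x ↦ hf.exp_mul_le_of_mem_Icc h0 hu hfu)
  rw [hfu, mul_comm]
  gcongr

theorem one_div_eight_le_of_le_on_Iic (hf : IsLogConcave f) (hnn : ∀ x, 0 ≤ f x)
    (hprob : ∫ x, f x = 1) (hmean : ∫ x, x * f x = 0) (hvar : ∫ x, x ^ 2 * f x = 1)
    (hside : ∀ x ≤ 0, f x ≤ f 0) : 1 / 8 ≤ f 0 := by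
  have hint : Integrable fun x ↦ x * f x := integrable_mul_of_integrable_sq_mul hnn
    (.of_integral_ne_zero (by simp [hprob])) (.of_integral_ne_zero (by simp [hvar]))
  rcases (hnn 0).eq_or_lt with h0 | h0
  · have := integral_eq_zero_of_eq_zero_on_Iic hnn
      (fun x hx ↦ le_antisymm (h0 ▸ hside x hx) (hnn x)) hint hmean
    linarith
  have := nine_div_sixteen_le_add_of_le_on_Iic_of_le_on_Ici hnn hprob hvar hside
    fun x hx ↦ hf.le_exp_one_mul_of_nonneg hnn hint hmean h0 hx
  nlinarith [exp_one_lt_three]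

end IsLogConcave

/-- An isotropic one-dimensional logconcave probability density (mean `0`,
variance `1`) satisfies `f 0 ≥ 1/8`. -/
theorem one_dim_isotropic_logconcave_density_at_zero
    (f : ℝ → ℝ)
    (hnn : ∀ x, 0 ≤ f x)
    (hlc : ∀ x y : ℝ, ∀ θ : ℝ, 0 ≤ θ → θ ≤ 1 →
      f x ^ θ * f y ^ (1 - θ) ≤ f (θ * x + (1 - θ) * y))
    (hprob : (∫ x, f x) = 1)
    (hmean : (∫ x, x * f x) = 0)
    (hvar : (∫ x, x ^ 2 * f x) = 1) :
    1 / 8 ≤ f 0 := by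
  have hf : IsLogConcave f := hlc
  rcases hf.le_on_Iic_or_le_on_Ici hnn 0 with hside | hside
  · exact hf.one_div_eight_le_of_le_on_Iic hnn hprob hmean hvar hside
  have := hf.comp_neg.one_div_eight_le_of_le_on_Iic (fun x ↦ hnn _)
    (by rw [integral_neg_eq_self f volume, hprob])
    (by rw [← integral_neg_eq_self, ← neg_eq_zero, ← integral_neg]; simpa using hmean)
    (by rw [← integral_neg_eq_self]; simpa using hvar)
    fun x hx ↦ by simpa using hside (-x) (by linarith)
  simpa using this
end

section
/- The support of any s-isotropic logconcave distribution on ℝⁿ contains a Euclidean ball of radius 1/(e·√s) centered at its mean. -/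
open MeasureTheory Set
open scoped ENNReal Pointwise

noncomputable section

/-- A probability measure on a real vector space is logconcave if it satisfies the
Prékopa–Leindler-type inequality `μ(λA + (1-λ)B) ≥ μ(A)^λ μ(B)^{1-λ}`. -/
def IsLogConcaveMeasure {E : Type*} [NormedAddCommGroup E] [NormedSpace ℝ E]
    [MeasurableSpace E] (μ : Measure E) : Prop :=
  ∀ A B : Set E, MeasurableSet A → MeasurableSet B → ∀ l : ℝ, 0 < l → l < 1 →
    μ A ^ l * μ B ^ (1 - l) ≤ μ (l • A + (1 - l) • B)

/-!
Suppose `y` lies in the ball but outside the support. The support of a logconcave measure is a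
closed convex set of full measure, so a hyperplane separates `y` from it: for some `v ≠ 0` the
centred variable `Z = ⟪v, X - m⟫` stays a.s. below `c = ‖v‖ / (e √s)`. By logconcavity the
positive variable `c - Z` has submultiplicative tails, which forces
`E (c - Z)² ≤ 2 (E (c - Z))²`, i.e. `E Z² ≤ c² < ‖v‖² / s`, contradicting isotropy.
-/

open scoped RealInnerProductSpace

-- Write `t = volume (Ioo 0 t)`, swap the integrals and shift `t = u + w`.
lemma lintegral_Ioi_mul_eq_lintegral_Ioi_add {H : ℝ → ℝ≥0∞} (hH : Measurable H) :
    ∫⁻ t in Ioi 0, H t * ENNReal.ofReal t = ∫⁻ u in Ioi 0, ∫⁻ w in Ioi 0, H (u + w) := by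
  set F : ℝ → ℝ → ℝ≥0∞ := fun u t => (Ioo 0 t).indicator (fun _ => H t) u
  have hF : Measurable (Function.uncurry F) :=
    (hH.comp measurable_snd).ite
      ((measurableSet_lt measurable_const measurable_fst).inter
        (measurableSet_lt measurable_fst measurable_snd)) measurable_const
  have inner_u : ∀ t, ∫⁻ u, F u t = (Ioi 0).indicator (fun t => H t * ENNReal.ofReal t) t := by
    intro t
    rw [lintegral_indicator measurableSet_Ioo, setLIntegral_const, Real.volume_Ioo, sub_zero]
    by_cases ht : 0 < t
    · rw [indicator_of_mem (mem_Ioi.mpr ht)]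
    · rw [indicator_of_notMem (show t ∉ Ioi 0 from ht), ENNReal.ofReal_of_nonpos (not_lt.mp ht),
        mul_zero]
  have inner_t : ∀ u, ∫⁻ t, F u t = (Ioi 0).indicator (fun u => ∫⁻ w in Ioi 0, H (u + w)) u := by
    intro u
    by_cases hu : 0 < u
    · have hFu : ∀ t, F u t = (Ioi u).indicator H t := fun t => by
        simp [F, indicator, hu]
      simp_rw [hFu, indicator_of_mem (mem_Ioi.mpr hu), lintegral_indicator measurableSet_Ioi]
      rw [← (measurePreserving_add_left volume u).setLIntegral_comp_preimage_emb
        (measurableEmbedding_addLeft u)]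
      simp
    · have hFu : ∀ t, F u t = 0 := fun t => by simp [F, indicator, hu]
      simp [hFu, indicator_of_notMem (show u ∉ Ioi 0 from hu)]
  calc ∫⁻ t in Ioi 0, H t * ENNReal.ofReal t = ∫⁻ t, ∫⁻ u, F u t := by
        simp_rw [inner_u, lintegral_indicator measurableSet_Ioi]
    _ = ∫⁻ u, ∫⁻ t, F u t := lintegral_lintegral_swap hF.aemeasurable |>.symm
    _ = ∫⁻ u in Ioi 0, ∫⁻ w in Ioi 0, H (u + w) := by
        simp_rw [inner_t, lintegral_indicator measurableSet_Ioi]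

lemma lintegral_Ioi_mul_le_sq {H : ℝ → ℝ≥0∞} (hH : Measurable H)
    (hsub : ∀ u w : ℝ, 0 < u → 0 < w → H (u + w) ≤ H u * H w) :
    ∫⁻ t in Ioi 0, H t * ENNReal.ofReal t ≤ (∫⁻ t in Ioi 0, H t) ^ 2 := by
  rw [lintegral_Ioi_mul_eq_lintegral_Ioi_add hH, sq, ← lintegral_mul_const _ hH]
  refine setLIntegral_mono' measurableSet_Ioi fun u hu => ?_
  rw [← lintegral_const_mul _ hH]
  exact setLIntegral_mono' measurableSet_Ioi fun w hw => hsub u w hu hw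

lemma integral_sq_le_of_submultiplicative_tails {α : Type*} [MeasurableSpace α] {μ : Measure α}
    {W : α → ℝ} (hW : Integrable W μ) (hW2 : Integrable (fun x => W x ^ 2) μ) (hW0 : 0 ≤ᵐ[μ] W)
    (hsub : ∀ u w : ℝ, 0 < u → 0 < w →
      μ {x | u + w < W x} ≤ μ {x | u < W x} * μ {x | w < W x}) :
    ∫ x, W x ^ 2 ∂μ ≤ 2 * (∫ x, W x ∂μ) ^ 2 := by
  set H : ℝ → ℝ≥0∞ := fun t => μ {x | t < W x}
  have hH : Measurable H := Antitone.measurable fun a b hab => measure_mono fun x hx =>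
    lt_of_le_of_lt hab hx
  have first : ENNReal.ofReal (∫ x, W x ∂μ) = ∫⁻ t in Ioi 0, H t := by
    rw [ofReal_integral_eq_lintegral_ofReal hW hW0,
      lintegral_eq_lintegral_meas_lt μ hW0 hW.aemeasurable]
  have second : ENNReal.ofReal (∫ x, W x ^ 2 ∂μ) = 2 * ∫⁻ t in Ioi 0, H t * ENNReal.ofReal t := by
    have hW0' : 0 ≤ᵐ[μ] fun x => W x ^ 2 := .of_forall fun x => sq_nonneg (W x)
    have := lintegral_rpow_eq_lintegral_meas_lt_mul μ hW0 hW.aemeasurable two_pos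
    simp only [Real.rpow_ofNat, ENNReal.ofReal_ofNat, show (2 : ℝ) - 1 = 1 by norm_num,
      Real.rpow_one] at this
    rw [ofReal_integral_eq_lintegral_ofReal hW2 hW0', this]
  have key : ENNReal.ofReal (∫ x, W x ^ 2 ∂μ) ≤ ENNReal.ofReal (2 * (∫ x, W x ∂μ) ^ 2) := by
    rw [second, ENNReal.ofReal_mul zero_le_two, ENNReal.ofReal_ofNat,
      ENNReal.ofReal_pow (integral_nonneg_of_ae hW0), first]
    gcongr
    exact lintegral_Ioi_mul_le_sq hH hsub
  exact (ENNReal.ofReal_le_ofReal_iff (by positivity)).mp key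

lemma ConcaveOn.smul_setOf_lt_add_smul_setOf_lt_subset {E : Type*} [AddCommGroup E] [Module ℝ E]
    {W : E → ℝ} (hW : ConcaveOn ℝ univ W) {l : ℝ} (hl₀ : 0 < l) (hl₁ : l < 1) (a b : ℝ) :
    l • {x | a < W x} + (1 - l) • {x | b < W x} ⊆ {x | l * a + (1 - l) * b < W x} := by
  rintro _ ⟨_, ⟨p, hp, rfl⟩, _, ⟨q, hq, rfl⟩, rfl⟩
  calc l * a + (1 - l) * b < l * W p + (1 - l) * W q :=
        add_lt_add (mul_lt_mul_of_pos_left hp hl₀) (mul_lt_mul_of_pos_left hq (sub_pos.mpr hl₁))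
    _ ≤ W (l • p + (1 - l) • q) :=
        hW.2 (mem_univ p) (mem_univ q) hl₀.le (by linarith) (by ring)

namespace IsLogConcaveMeasure

variable {E : Type*} [NormedAddCommGroup E] [NormedSpace ℝ E] [MeasurableSpace E]
  {μ : Measure E}

theorem convex_support [OpensMeasurableSpace E] (hμ : IsLogConcaveMeasure μ) :
    Convex ℝ μ.support := by
  refine convex_iff_forall_pos.mpr fun x hx y hy a b ha hb hab => ?_
  rw [Metric.nhds_basis_ball.mem_measureSupport] at hx hy ⊢
  intro δ hδ
  have hballs : a • Metric.ball x δ + b • Metric.ball y δ = Metric.ball (a • x + b • y) δ := by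
    rw [smul_ball ha.ne', smul_ball hb.ne', Real.norm_of_nonneg ha.le, Real.norm_of_nonneg hb.le,
      ball_add_ball (mul_pos ha hδ) (mul_pos hb hδ), ← add_mul, hab, one_mul]
  obtain rfl : b = 1 - a := by linarith
  calc 0 < μ (Metric.ball x δ) ^ a * μ (Metric.ball y δ) ^ (1 - a) :=
        ENNReal.mul_pos (ENNReal.rpow_pos_of_nonneg (hx δ hδ) ha.le).ne'
          (ENNReal.rpow_pos_of_nonneg (hy δ hδ) hb.le).ne'
    _ ≤ _ := hμ _ _ measurableSet_ball measurableSet_ball a ha (by linarith)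
    _ = _ := by rw [hballs]

theorem rpow_mul_rpow_le_measure_setOf_lt (hμ : IsLogConcaveMeasure μ) {W : E → ℝ}
    (hW : ConcaveOn ℝ univ W) (hWm : Measurable W) {l : ℝ} (hl₀ : 0 < l) (hl₁ : l < 1)
    (a b : ℝ) :
    μ {x | a < W x} ^ l * μ {x | b < W x} ^ (1 - l) ≤ μ {x | l * a + (1 - l) * b < W x} :=
  (hμ _ _ (measurableSet_lt measurable_const hWm) (measurableSet_lt measurable_const hWm)
    l hl₀ hl₁).trans (measure_mono (hW.smul_setOf_lt_add_smul_setOf_lt_subset hl₀ hl₁ a b))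

theorem measure_setOf_add_lt_le_mul (hμ : IsLogConcaveMeasure μ) {W : E → ℝ}
    (hW : ConcaveOn ℝ univ W) (hWm : Measurable W) (h0 : μ {x | 0 < W x} = 1) {u w : ℝ}
    (hu : 0 < u) (hw : 0 < w) :
    μ {x | u + w < W x} ≤ μ {x | u < W x} * μ {x | w < W x} := by
  set l := u / (u + w)
  have hl₀ : 0 < l := by positivity
  have hl₁ : l < 1 := (div_lt_one (by positivity)).mpr (by linarith)
  have hlu : l * (u + w) = u := div_mul_cancel₀ u (by positivity)
  have hu' : l * (u + w) + (1 - l) * 0 = u := by linarith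
  have hw' : l * 0 + (1 - l) * (u + w) = w := by linarith
  have left := hμ.rpow_mul_rpow_le_measure_setOf_lt hW hWm hl₀ hl₁ (u + w) 0
  have right := hμ.rpow_mul_rpow_le_measure_setOf_lt hW hWm hl₀ hl₁ 0 (u + w)
  rw [h0, ENNReal.one_rpow, mul_one, hu'] at left
  rw [h0, ENNReal.one_rpow, one_mul, hw'] at right
  calc μ {x | u + w < W x} = μ {x | u + w < W x} ^ l * μ {x | u + w < W x} ^ (1 - l) := by
        rw [← ENNReal.rpow_add_of_nonneg _ _ hl₀.le (by linarith), add_sub_cancel,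
          ENNReal.rpow_one]
    _ ≤ μ {x | u < W x} * μ {x | w < W x} := mul_le_mul' left right

theorem integral_sq_le_two_mul_sq_integral [IsProbabilityMeasure μ] (hμ : IsLogConcaveMeasure μ)
    {W : E → ℝ} (hW : ConcaveOn ℝ univ W) (hWm : Measurable W)
    (hW2 : Integrable (fun x => W x ^ 2) μ) (hpos : ∀ᵐ x ∂μ, 0 < W x) :
    ∫ x, W x ^ 2 ∂μ ≤ 2 * (∫ x, W x ∂μ) ^ 2 :=
  have h0 : μ {x | 0 < W x} = 1 := (ae_iff_prob_eq_one (measurable_const.lt hWm)).mp hpos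
  integral_sq_le_of_submultiplicative_tails
    (((memLp_two_iff_integrable_sq hWm.aestronglyMeasurable).mpr hW2).integrable one_le_two) hW2
    (hpos.mono fun _ => le_of_lt) fun _ _ hu hw => hμ.measure_setOf_add_lt_le_mul hW hWm h0 hu hw

theorem integral_sq_le_sq_of_ae_lt [IsProbabilityMeasure μ] (hμ : IsLogConcaveMeasure μ)
    {g : E → ℝ} (hg : ConvexOn ℝ univ g) (hgm : Measurable g)
    (hg2 : Integrable (fun x => g x ^ 2) μ) (hmean : ∫ x, g x ∂μ = 0) {c : ℝ}
    (hlt : ∀ᵐ x ∂μ, g x < c) :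
    ∫ x, g x ^ 2 ∂μ ≤ c ^ 2 := by
  have hg1 : Integrable g μ :=
    ((memLp_two_iff_integrable_sq hgm.aestronglyMeasurable).mpr hg2).integrable one_le_two
  have hexpand : (fun x => (c - g x) ^ 2) = fun x => c ^ 2 - 2 * c * g x + g x ^ 2 := by
    ext x; ring
  have hint : Integrable (fun x => c ^ 2 - 2 * c * g x) μ :=
    (integrable_const _).sub (hg1.const_mul _)
  have first : ∫ x, (c - g x) ∂μ = c := by
    rw [integral_sub (integrable_const c) hg1, hmean]; simp
  have second : ∫ x, (c - g x) ^ 2 ∂μ = c ^ 2 + ∫ x, g x ^ 2 ∂μ := by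
    rw [hexpand, integral_add hint hg2, integral_sub (integrable_const _) (hg1.const_mul _),
      integral_const_mul, hmean]; simp
  have := hμ.integral_sq_le_two_mul_sq_integral (W := fun x => c - g x)
    ((concaveOn_const c convex_univ).sub hg)
    (measurable_const.sub hgm) (by rw [hexpand]; exact hint.add hg2)
    (hlt.mono fun _ => sub_pos.mpr)
  rw [first, second] at this
  linarith

end IsLogConcaveMeasure

section InnerProductSpace

variable {E : Type*} [NormedAddCommGroup E] [InnerProductSpace ℝ E]
  {α : Type*} [MeasurableSpace α] {μ : Measure α}

lemma convexOn_inner_sub (v c : E) : ConvexOn ℝ univ fun x => ⟪v, x - c⟫ := by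
  simp_rw [inner_sub_right]
  exact ((innerₛₗ ℝ v).convexOn convex_univ).sub (concaveOn_const _ convex_univ)

lemma integrable_of_forall_integrable_inner [FiniteDimensional ℝ E] {X : α → E}
    (h : ∀ v, Integrable (fun x => ⟪v, X x⟫) μ) : Integrable X μ := by
  let b := stdOrthonormalBasis ℝ E
  have hX : X = fun x => ∑ i, ⟪b i, X x⟫ • b i := funext fun x => (b.sum_repr' (X x)).symm
  rw [hX]
  exact integrable_finsetSum _ fun i _ => (h (b i)).smul_const (b i)

lemma integrable_of_forall_integrable_inner_sub_sq [FiniteDimensional ℝ E] [IsFiniteMeasure μ]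
    {X : α → E} (hX : AEStronglyMeasurable X μ) (c : E)
    (h : ∀ v, Integrable (fun x => ⟪v, X x - c⟫ ^ 2) μ) : Integrable X μ := by
  refine integrable_of_forall_integrable_inner fun v => ?_
  have hmeas : AEStronglyMeasurable (fun x => ⟪v, X x - c⟫) μ :=
    aestronglyMeasurable_const.inner (hX.sub aestronglyMeasurable_const)
  have h1 := ((memLp_two_iff_integrable_sq hmeas).mpr (h v)).integrable one_le_two
  refine (h1.add (integrable_const ⟪v, c⟫)).congr (.of_forall fun x => ?_)
  simp [inner_sub_right]

lemma integral_inner_sub_integral [CompleteSpace E] [IsProbabilityMeasure μ] {X : α → E}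
    (hX : Integrable X μ) (v : E) : ∫ x, ⟪v, X x - ∫ y, X y ∂μ⟫ ∂μ = 0 := by
  rw [integral_inner (f := fun x => X x - ∫ y, X y ∂μ) (hX.sub (integrable_const _)),
    integral_sub hX (integrable_const _), integral_const]
  simp

lemma exists_ae_inner_lt_of_notMem_support [CompleteSpace E] [MeasurableSpace E]
    [HereditarilyLindelofSpace E] {μ : Measure E} [NeZero μ] (hconv : Convex ℝ μ.support) {y : E}
    (hy : y ∉ μ.support) : ∃ v ≠ 0, ∀ᵐ x ∂μ, ⟪v, x⟫ < ⟪v, y⟫ := by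
  obtain ⟨f, u, hf, hfy⟩ := geometric_hahn_banach_closed_point hconv Measure.isClosed_support hy
  set v := (InnerProductSpace.toDual ℝ E).symm f
  have hv : ∀ x, ⟪v, x⟫ = f x := fun x => InnerProductSpace.toDual_symm_apply
  have hae : ∀ᵐ x ∂μ, ⟪v, x⟫ < ⟪v, y⟫ :=
    Filter.mem_of_superset Measure.support_mem_ae fun x hx =>
      show ⟪v, x⟫ < ⟪v, y⟫ by rw [hv, hv]; exact (hf x hx).trans hfy
  refine ⟨v, fun hv0 => NeZero.ne μ ?_, hae⟩
  simpa [hv0] using hae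

end InnerProductSpace

theorem logconcave_support_contains_ball_general (n : ℕ) (s : ℝ)
    (P : Measure (EuclideanSpace ℝ (Fin n))) [IsProbabilityMeasure P]
    (hlc : IsLogConcaveMeasure P)
    (m : EuclideanSpace ℝ (Fin n)) (hm : m = ∫ x, x ∂P)
    (hiso : ∀ v : EuclideanSpace ℝ (Fin n),
      s⁻¹ * ‖v‖ ^ 2 ≤ (∫ x, (inner ℝ v (x - m) : ℝ) ^ 2 ∂P) ∧
      (∫ x, (inner ℝ v (x - m) : ℝ) ^ 2 ∂P) ≤ s * ‖v‖ ^ 2) :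
    Metric.ball m (1 / (Real.exp 1 * Real.sqrt s)) ⊆
      {y | ∀ ε : ℝ, 0 < ε → 0 < P (Metric.ball y ε)} := by
  set r := 1 / (Real.exp 1 * Real.sqrt s)
  intro y hy
  have hs : 0 < s := by
    -- for `s ≤ 0` the radius is `1 / (e * 0) = 0`
    by_contra! hs
    simp [r, Real.sqrt_eq_zero'.mpr hs] at hy
  suffices y ∈ P.support from Metric.nhds_basis_ball.mem_measureSupport.mp this
  by_contra hyS
  obtain ⟨v, hv0, hvy⟩ := exists_ae_inner_lt_of_notMem_support hlc.convex_support hyS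
  have hint : ∀ w, Integrable (fun x => ⟪w, x - m⟫ ^ 2) P := fun w => by
    rcases eq_or_ne w 0 with rfl | hw
    · simp
    · exact Integrable.of_integral_ne_zero ((hiso w).1.trans_lt' (by positivity)).ne'
  have hX := integrable_of_forall_integrable_inner_sub_sq aestronglyMeasurable_id m hint
  have hlt : ∀ᵐ x ∂P, ⟪v, x - m⟫ < ‖v‖ * r := hvy.mono fun x hx => by
    calc ⟪v, x - m⟫ < ⟪v, y - m⟫ := by simpa only [inner_sub_right] using sub_lt_sub_right hx _
      _ ≤ ‖v‖ * ‖y - m‖ := real_inner_le_norm v _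
      _ < ‖v‖ * r := mul_lt_mul_of_pos_left (mem_ball_iff_norm.mp hy) (norm_pos_iff.mpr hv0)
  have hvar := hlc.integral_sq_le_sq_of_ae_lt (convexOn_inner_sub v m) (by fun_prop) (hint v)
    (hm ▸ integral_inner_sub_integral hX v) hlt
  have hr : (‖v‖ * r) ^ 2 < s⁻¹ * ‖v‖ ^ 2 := by
    have he : 1 < Real.exp 1 ^ 2 := one_lt_pow₀ (Real.one_lt_exp_iff.mpr one_pos) two_ne_zero
    have hv : 0 < ‖v‖ ^ 2 := by positivity
    rw [mul_pow, div_pow, mul_pow, Real.sq_sqrt hs.le, one_pow]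
    field_simp
    nlinarith
  exact hr.not_ge ((hiso v).1.trans hvar)

/-- The support of an `s`-isotropic logconcave distribution on `ℝⁿ` contains a
ball of radius `1/(e √s)` centered at its mean: every point of that ball has all its
neighborhoods of positive measure. -/
theorem logconcave_support_contains_ball (n : ℕ) (s : ℝ) (hs : 1 ≤ s)
    (P : Measure (EuclideanSpace ℝ (Fin n))) [IsProbabilityMeasure P]
    (hlc : IsLogConcaveMeasure P)
    (m : EuclideanSpace ℝ (Fin n)) (hm : m = ∫ x, x ∂P)
    (hiso : ∀ v : EuclideanSpace ℝ (Fin n),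
      s⁻¹ * ‖v‖ ^ 2 ≤ (∫ x, (inner ℝ v (x - m) : ℝ) ^ 2 ∂P) ∧
      (∫ x, (inner ℝ v (x - m) : ℝ) ^ 2 ∂P) ≤ s * ‖v‖ ^ 2) :
    Metric.ball m (1 / (Real.exp 1 * Real.sqrt s)) ⊆
      {y | ∀ ε : ℝ, 0 < ε → 0 < P (Metric.ball y ε)} :=
  logconcave_support_contains_ball_general n s P hlc m hm hiso
end
end

section
/- Let μ, π be probability measures on a measurable space with Markov kernel P reversible with respect to stationary distribution π. If the essential supremum over x of ‖δ_x P^k − π‖_TV is at most ε, then ‖d(νP^k)/dπ − 1‖_{L^∞(π)} ≤ 2·‖dν/dπ − 1‖_{L^∞(π)}·ε for any initial distribution ν ≪ π. -/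
/-!
Reversibility lets `P` be moved across the pairing `∫ φ · P(·, A) dπ`, so if `ν = f π` then
`νPᵏ = (Pᵏ f) π`: the density of `νPᵏ` at `x` is `∫ f d(δₓPᵏ)`. Since `∫ f dπ = 1`, its deviation
from `1` is the difference of the integrals of `f` against `δₓPᵏ` and against `π`. A version of `f`
with values in an interval of length `2 ‖f - 1‖_∞` exists, and by the layer-cake formula such a
difference is at most the length of the interval times `‖δₓPᵏ - π‖_TV`.
-/

open MeasureTheory Set
open scoped ENNReal

noncomputable section

/-- Total-variation distance between two measures, as the supremum over measurable sets of the
discrepancy of the measure assigned to the set. -/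
def tvDist {α : Type*} [MeasurableSpace α] (μ ν : Measure α) : ℝ :=
  ⨆ A : {A : Set α // MeasurableSet A}, |(μ A.1).toReal - (ν A.1).toReal|

open ProbabilityTheory

namespace ProbabilityTheory.Kernel

variable {α : Type*} [MeasurableSpace α] {κ η : Kernel α α} {π : Measure α}

instance IsMarkovKernel.pow (κ : Kernel α α) [IsMarkovKernel κ] (n : ℕ) :
    IsMarkovKernel (κ ^ n) := by
  induction n with
  | zero => rw [pow_zero]; exact inferInstanceAs (IsMarkovKernel Kernel.id)
  | succ n ih => rw [pow_succ]; exact inferInstanceAs (IsMarkovKernel ((κ ^ n) ∘ₖ κ))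

lemma iterate_bind_eq_bind_pow (κ : Kernel α α) (k : ℕ) (μ : Measure α) :
    (fun μ : Measure α => μ.bind κ)^[k] μ = μ.bind ⇑(κ ^ k) := by
  induction k with
  | zero => exact Measure.bind_dirac.symm
  | succ n ih => rw [Function.iterate_succ_apply', ih, pow_succ', Measure.comp_assoc]; rfl

lemma IsReversible.map_swap_compProd [IsFiniteMeasure π] [IsFiniteKernel κ]
    (h : IsReversible κ π) : (π ⊗ₘ κ).map Prod.swap = π ⊗ₘ κ := by
  have hrect : ∀ s ∈ image2 (· ×ˢ ·) {A : Set α | MeasurableSet A} {B | MeasurableSet B},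
      (π ⊗ₘ κ).map Prod.swap s = (π ⊗ₘ κ) s := by
    rintro _ ⟨A, hA, B, hB, rfl⟩
    rw [Measure.map_apply measurable_swap (hA.prod hB), preimage_swap_prod,
      Measure.compProd_apply_prod hB hA, Measure.compProd_apply_prod hA hB]
    exact h hB hA
  refine ext_of_generate_finite _ generateFrom_prod.symm isPiSystem_prod hrect ?_
  simpa using hrect _ ⟨univ, .univ, univ, .univ, rfl⟩

lemma IsReversible.lintegral_mul_apply [IsFiniteMeasure π] [IsFiniteKernel κ]
    (h : IsReversible κ π) {φ : α → ℝ≥0∞} (hφ : Measurable φ) {A : Set α}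
    (hA : MeasurableSet A) :
    ∫⁻ x, φ x * κ x A ∂π = ∫⁻ x in A, ∫⁻ y, φ y ∂κ x ∂π := by
  have hF : Measurable fun p : α × α => A.indicator 1 p.1 * φ p.2 :=
    ((measurable_one.indicator hA).comp measurable_fst).mul (hφ.comp measurable_snd)
  calc ∫⁻ x, φ x * κ x A ∂π
      = ∫⁻ p, A.indicator 1 p.2 * φ p.1 ∂(π ⊗ₘ κ) := by
        rw [Measure.lintegral_compProd (by fun_prop)]
        congr with x
        simp_rw [mul_comm _ (φ x)]
        rw [lintegral_const_mul _ (measurable_one.indicator hA), lintegral_indicator_one hA]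
    _ = ∫⁻ p, A.indicator 1 p.1 * φ p.2 ∂(π ⊗ₘ κ) := by
        conv_lhs => rw [← h.map_swap_compProd]
        exact MeasureTheory.lintegral_map (hF.comp measurable_swap) measurable_swap
    _ = ∫⁻ x in A, ∫⁻ y, φ y ∂κ x ∂π := by
        rw [Measure.lintegral_compProd hF, ← lintegral_indicator hA]
        congr with x
        by_cases hx : x ∈ A <;> simp [hx]

lemma IsReversible.id : IsReversible Kernel.id π := by
  intro A B hA hB
  simp only [Kernel.id_apply, Measure.dirac_apply' _ hB, Measure.dirac_apply' _ hA,
    lintegral_indicator_one hB, lintegral_indicator_one hA, Measure.restrict_apply hA,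
    Measure.restrict_apply hB, inter_comm]

lemma IsReversible.comp [IsFiniteMeasure π] [IsFiniteKernel κ] [IsFiniteKernel η]
    (hκ : IsReversible κ π) (hη : IsReversible η π) (hcomm : κ ∘ₖ η = η ∘ₖ κ) :
    IsReversible (κ ∘ₖ η) π := by
  intro A B hA hB
  calc ∫⁻ x in A, (κ ∘ₖ η) x B ∂π
      = ∫⁻ x, κ x B * η x A ∂π := by
        simp_rw [Kernel.comp_apply' _ _ _ hB]
        exact (hη.lintegral_mul_apply (κ.measurable_coe hB) hA).symm
    _ = ∫⁻ x in B, (η ∘ₖ κ) x A ∂π := by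
        simp_rw [Kernel.comp_apply' _ _ _ hA, mul_comm (κ _ B)]
        exact hκ.lintegral_mul_apply (η.measurable_coe hA) hB
    _ = ∫⁻ x in B, (κ ∘ₖ η) x A ∂π := by rw [hcomm]

lemma IsReversible.pow [IsFiniteMeasure π] [IsMarkovKernel κ] (h : IsReversible κ π) (n : ℕ) :
    IsReversible (κ ^ n) π := by
  induction n with
  | zero => exact IsReversible.id
  | succ n ih => rw [pow_succ']; exact h.comp ih (Commute.self_pow κ n)

lemma IsReversible.bind_withDensity [IsFiniteMeasure π] [IsFiniteKernel κ] (h : IsReversible κ π)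
    {φ : α → ℝ≥0∞} (hφ : Measurable φ) :
    (π.withDensity φ).bind κ = π.withDensity fun x => ∫⁻ y, φ y ∂κ x := by
  ext A hA
  rw [Measure.bind_apply hA κ.aemeasurable,
    lintegral_withDensity_eq_lintegral_mul π hφ (κ.measurable_coe hA), withDensity_apply _ hA,
    ← h.lintegral_mul_apply hφ hA]
  rfl

lemma IsReversible.rnDeriv_bind_withDensity [IsFiniteMeasure π] [IsFiniteKernel κ]
    (h : IsReversible κ π) {φ : α → ℝ≥0∞} (hφ : Measurable φ) :
    ((π.withDensity φ).bind κ).rnDeriv π =ᵐ[π] fun x => ∫⁻ y, φ y ∂κ x := by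
  rw [h.bind_withDensity hφ]
  exact Measure.rnDeriv_withDensity π hφ.lintegral_kernel

end ProbabilityTheory.Kernel

section TotalVariation

variable {α : Type*} [MeasurableSpace α] {μ ρ : Measure α}

lemma abs_measureReal_sub_le_tvDist [IsFiniteMeasure μ] [IsFiniteMeasure ρ] {A : Set α}
    (hA : MeasurableSet A) : |μ.real A - ρ.real A| ≤ tvDist μ ρ := by
  unfold tvDist
  refine le_ciSup (f := fun B : {B : Set α // MeasurableSet B} => |μ.real B - ρ.real B|)
    ⟨μ.real univ + ρ.real univ, ?_⟩ ⟨A, hA⟩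
  rintro _ ⟨B, rfl⟩
  refine (abs_sub _ _).trans ?_
  rw [abs_of_nonneg measureReal_nonneg, abs_of_nonneg measureReal_nonneg]
  exact add_le_add (measureReal_mono (subset_univ _)) (measureReal_mono (subset_univ _))

lemma tvDist_nonneg [IsFiniteMeasure μ] [IsFiniteMeasure ρ] : 0 ≤ tvDist μ ρ :=
  (abs_nonneg _).trans (abs_measureReal_sub_le_tvDist MeasurableSet.empty)

lemma eq_of_tvDist_le_zero [IsFiniteMeasure μ] [IsFiniteMeasure ρ] (h : tvDist μ ρ ≤ 0) :
    μ = ρ := by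
  ext A hA
  rw [← measureReal_eq_measureReal_iff]
  exact sub_eq_zero.1 (abs_nonpos_iff.1 ((abs_measureReal_sub_le_tvDist hA).trans h))

variable [IsProbabilityMeasure μ] [IsProbabilityMeasure ρ] {g : α → ℝ}

lemma abs_integral_sub_integral_le_tvDist_of_nonneg (hg : Measurable g) {c : ℝ}
    (hg0 : ∀ x, 0 ≤ g x) (hgc : ∀ x, g x ≤ c) :
    |∫ x, g x ∂μ - ∫ x, g x ∂ρ| ≤ c * tvDist μ ρ := by
  obtain ⟨x₀⟩ : Nonempty α := nonempty_of_isProbabilityMeasure μ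
  have hc : 0 ≤ c := (hg0 x₀).trans (hgc x₀)
  have layer (σ : Measure α) [IsProbabilityMeasure σ] :
      ∫ x, g x ∂σ = ∫ t in Ioc 0 c, σ.real {x | t ≤ g x} :=
    (Integrable.of_bound hg.aestronglyMeasurable c (ae_of_all _ fun x => by
        rw [Real.norm_eq_abs, abs_of_nonneg (hg0 x)]; exact hgc x)).integral_eq_integral_Ioc_meas_le
      (ae_of_all _ hg0) (ae_of_all _ hgc)
  have integrableOn_level (σ : Measure α) [IsProbabilityMeasure σ] :
      IntegrableOn (fun t => σ.real {x | t ≤ g x}) (Ioc 0 c) :=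
    Measure.integrableOn_of_bounded (M := 1) measure_Ioc_lt_top.ne
      (Antitone.measurable fun s t hst => measureReal_mono fun x (hx : t ≤ g x) =>
        hst.trans hx).aestronglyMeasurable
      (ae_of_all _ fun t => by
        rw [Real.norm_eq_abs, abs_of_nonneg measureReal_nonneg]; exact measureReal_le_one)
  rw [layer μ, layer ρ, ← integral_sub (integrableOn_level μ) (integrableOn_level ρ),
    ← Real.norm_eq_abs, mul_comm]
  refine (norm_setIntegral_le_of_norm_le_const measure_Ioc_lt_top fun t _ =>
    abs_measureReal_sub_le_tvDist (measurableSet_le measurable_const hg)).trans ?_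
  rw [Real.volume_real_Ioc_of_le hc, sub_zero]

lemma abs_integral_sub_integral_le_tvDist (hg : Measurable g) {a b : ℝ} (hga : ∀ x, a ≤ g x)
    (hgb : ∀ x, g x ≤ b) : |∫ x, g x ∂μ - ∫ x, g x ∂ρ| ≤ (b - a) * tvDist μ ρ := by
  have hint (σ : Measure α) [IsProbabilityMeasure σ] : Integrable g σ :=
    Integrable.of_bound hg.aestronglyMeasurable (max |a| |b|)
      (ae_of_all _ fun x => abs_le_max_abs_abs (hga x) (hgb x))
  have key := abs_integral_sub_integral_le_tvDist_of_nonneg (μ := μ) (ρ := ρ) (hg.sub_const a)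
    (fun x => sub_nonneg.2 (hga x)) (fun x => sub_le_sub_right (hgb x) a)
  rwa [integral_sub (hint μ) (integrable_const a), integral_sub (hint ρ) (integrable_const a),
    integral_const, integral_const, probReal_univ, probReal_univ, sub_sub_sub_cancel_right] at key

end TotalVariation

lemma MeasureTheory.Measure.exists_withDensity_ofReal_eq {α : Type*} [MeasurableSpace α]
    {ν π : Measure α} [SigmaFinite ν] [SigmaFinite π] (hac : ν ≪ π) {a b : ℝ} (hab : a ≤ b)
    (h : ∀ᵐ x ∂π, (ν.rnDeriv π x).toReal ∈ Icc a b) :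
    ∃ g : α → ℝ, Measurable g ∧ (∀ x, g x ∈ Icc a b) ∧
      π.withDensity (fun x => ENNReal.ofReal (g x)) = ν := by
  refine ⟨fun x => projIcc a b hab (ν.rnDeriv π x).toReal,
    (continuous_subtype_val.comp continuous_projIcc).measurable.comp
      (Measure.measurable_rnDeriv ν π).ennreal_toReal, fun x => (projIcc a b hab _).2, ?_⟩
  conv_rhs => rw [← Measure.withDensity_rnDeriv_eq ν π hac]
  refine withDensity_congr_ae ?_
  filter_upwards [h, Measure.rnDeriv_lt_top ν π] with x hx hfin
  rw [projIcc_of_mem hab hx, ENNReal.ofReal_toReal hfin.ne]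

namespace ProbabilityTheory.Kernel

variable {α : Type*} [MeasurableSpace α] {κ : Kernel α α} {π ν : Measure α}
  [IsProbabilityMeasure π] [IsMarkovKernel κ] [IsProbabilityMeasure ν]

lemma IsReversible.ae_abs_rnDeriv_bind_sub_one_le (h : IsReversible κ π) (hac : ν ≪ π) {m ε : ℝ}
    (hν : ∀ᵐ x ∂π, |(ν.rnDeriv π x).toReal - 1| ≤ m) (htv : ∀ᵐ x ∂π, tvDist (κ x) π ≤ ε) :
    ∀ᵐ x ∂π, |((ν.bind κ).rnDeriv π x).toReal - 1| ≤ 2 * m * ε := by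
  obtain ⟨x₀, hx₀, hx₀ε⟩ := (hν.and htv).exists
  have hm : 0 ≤ m := (abs_nonneg _).trans hx₀
  have hε : 0 ≤ ε := tvDist_nonneg.trans hx₀ε
  -- `δₓκ` may charge `π`-null sets, so the bound on the density must hold everywhere.
  obtain ⟨g, hg, hg_mem, rfl⟩ := Measure.exists_withDensity_ofReal_eq hac
    (a := max (1 - m) 0) (b := 1 + m) (max_le (by linarith) (by linarith))
    (hν.mono fun x hx => ⟨max_le (by linarith [(abs_le.1 hx).1]) ENNReal.toReal_nonneg,
      by linarith [(abs_le.1 hx).2]⟩)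
  have toReal_lintegral (σ : Measure α) :
      (∫⁻ x, ENNReal.ofReal (g x) ∂σ).toReal = ∫ x, g x ∂σ :=
    (integral_eq_lintegral_of_nonneg_ae (ae_of_all _ fun x => (le_max_right _ _).trans
      (hg_mem x).1) hg.aestronglyMeasurable).symm
  have integral_eq_one : ∫ x, g x ∂π = 1 := by
    rw [← toReal_lintegral, ← setLIntegral_univ, ← withDensity_apply _ .univ, measure_univ,
      ENNReal.toReal_one]
  filter_upwards [h.rnDeriv_bind_withDensity hg.ennreal_ofReal, htv] with x hx hxε
  rw [hx, toReal_lintegral, ← integral_eq_one]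
  calc _ ≤ (1 + m - max (1 - m) 0) * tvDist (κ x) π :=
        abs_integral_sub_integral_le_tvDist hg (fun y => (hg_mem y).1) fun y => (hg_mem y).2
    _ ≤ 2 * m * ε :=
        mul_le_mul (by linarith [le_max_left (1 - m) 0]) hxε tvDist_nonneg (by linarith)

lemma IsReversible.essSup_rnDeriv_bind_sub_one_le (h : IsReversible κ π) (hac : ν ≪ π) {ε : ℝ}
    (htv : ∀ᵐ x ∂π, tvDist (κ x) π ≤ ε) :
    essSup (fun x => ENNReal.ofReal |((ν.bind κ).rnDeriv π x).toReal - 1|) π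
      ≤ 2 * essSup (fun x => ENNReal.ofReal |(ν.rnDeriv π x).toReal - 1|) π * ENNReal.ofReal ε := by
  set M := essSup (fun x => ENNReal.ofReal |(ν.rnDeriv π x).toReal - 1|) π
  obtain ⟨x₀, hx₀⟩ := htv.exists
  -- `⊤ * 0 = 0` in `ℝ≥0∞`, so for `ε = 0` the bound is needed even when `M = ⊤`.
  rcases (tvDist_nonneg.trans hx₀).eq_or_lt with rfl | hε
  · have hbind : ν.bind κ = π := by
      rw [Measure.bind_congr_right (hac.ae_le (htv.mono fun x => eq_of_tvDist_le_zero)),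
        Measure.bind_const, measure_univ, one_smul]
    rw [hbind, essSup_congr_ae (g := fun _ => 0)
      ((Measure.rnDeriv_self π).mono fun x hx => by simp [hx]), essSup_const _ (NeZero.ne π)]
    exact zero_le
  by_cases hM : M = ⊤
  · simp [hM, hε]
  have hν : ∀ᵐ x ∂π, |(ν.rnDeriv π x).toReal - 1| ≤ M.toReal :=
    (ENNReal.ae_le_essSup _).mono fun x hx => (ENNReal.ofReal_le_iff_le_toReal hM).1 hx
  calc _ ≤ essSup (fun _ => ENNReal.ofReal (2 * M.toReal * ε)) π :=
        essSup_mono_ae ((h.ae_abs_rnDeriv_bind_sub_one_le hac hν htv).mono fun x hx =>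
          ENNReal.ofReal_le_ofReal hx)
    _ = 2 * M * ENNReal.ofReal ε := by
        rw [essSup_const _ (NeZero.ne π), ENNReal.ofReal_mul (by positivity),
          ENNReal.ofReal_mul zero_le_two, ENNReal.ofReal_toReal hM, ENNReal.ofReal_ofNat]

end ProbabilityTheory.Kernel

theorem boosting_to_renyi_infinity_general {α : Type*} [MeasurableSpace α]
    (P : ProbabilityTheory.Kernel α α) [ProbabilityTheory.IsMarkovKernel P]
    (π' : Measure α) [IsProbabilityMeasure π']
    (hrev : ∀ A B : Set α, MeasurableSet A → MeasurableSet B →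
      (∫⁻ x in A, P x B ∂π') = ∫⁻ x in B, P x A ∂π')
    (ν : Measure α) [IsProbabilityMeasure ν] (hac : ν ≪ π')
    (k : ℕ) (ε : ℝ)
    (hk : ∀ᵐ x ∂π',
      tvDist ((fun μ : Measure α => μ.bind (fun a => P a))^[k] (Measure.dirac x)) π' ≤ ε) :
    essSup (fun x =>
        ENNReal.ofReal
          |((((fun μ : Measure α => μ.bind (fun a => P a))^[k] ν).rnDeriv π') x).toReal - 1|) π'
      ≤ 2 * essSup (fun x => ENNReal.ofReal |((ν.rnDeriv π') x).toReal - 1|) π' *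
          ENNReal.ofReal ε := by
  have htv : ∀ᵐ x ∂π', tvDist ((P ^ k) x) π' ≤ ε := by
    filter_upwards [hk] with x hx
    rwa [Kernel.iterate_bind_eq_bind_pow, Measure.dirac_bind (P ^ k).measurable] at hx
  rw [Kernel.iterate_bind_eq_bind_pow]
  have hrevk : (P ^ k).IsReversible π' := Kernel.IsReversible.pow (fun A B => hrev A B) k
  exact hrevk.essSup_rnDeriv_bind_sub_one_le hac htv

/-- **boosting TV ergodicity to Rényi-infinity.** If `P` is a Markov kernel
reversible with respect to `π` and the essential supremum over `x` of `‖δₓ Pᵏ − π‖_TV` is at most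
`ε`, then for any initial `ν ≪ π`,
`‖d(νPᵏ)/dπ − 1‖_{L^∞(π)} ≤ 2 ‖dν/dπ − 1‖_{L^∞(π)} · ε`. -/
theorem boosting_to_renyi_infinity {α : Type*} [MeasurableSpace α]
    (P : ProbabilityTheory.Kernel α α) [ProbabilityTheory.IsMarkovKernel P]
    (π' : Measure α) [IsProbabilityMeasure π']
    (hrev : ∀ A B : Set α, MeasurableSet A → MeasurableSet B →
      (∫⁻ x in A, P x B ∂π') = ∫⁻ x in B, P x A ∂π')
    (ν : Measure α) [IsProbabilityMeasure ν] (hac : ν ≪ π')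
    (k : ℕ) (ε : ℝ) (hε : 0 ≤ ε)
    (hk : ∀ᵐ x ∂π',
      tvDist ((fun μ : Measure α => μ.bind (fun a => P a))^[k] (Measure.dirac x)) π' ≤ ε) :
    essSup (fun x =>
        ENNReal.ofReal
          |((((fun μ : Measure α => μ.bind (fun a => P a))^[k] ν).rnDeriv π') x).toReal - 1|) π'
      ≤ 2 * essSup (fun x => ENNReal.ofReal |((ν.rnDeriv π') x).toReal - 1|) π' *
          ENNReal.ofReal ε :=
  boosting_to_renyi_infinity_general P π' hrev ν hac k ε hk
end
end
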